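/- arXiv:2205.12249 — 12 statements merged into one kernel-verified Lean document; each statement's English description precedes it below -/
import Mathlib

section
/- For every block-aware caching instance and every time τ ∈ {1,…,T}, the set function f_τ on subsets of 𝓑 × {0,1,…,T} is submodular: for all sets of flushes S and S', f_τ(S ∪ S') + f_τ(S ∩ S') ≤ f_τ(S) + f_τ(S'). -/
open scoped Classical

/-- A block-aware caching instance: `n` pages `Fin n`, `m` blocks `Fin m`,
blocks of size at most `β`, block costs `c`, cache size `k`, request
sequence `req` over times `1,…,T`. -/
structure BlockInstance where
  n : ℕ
  m : ℕ
  β : ℕ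
  k : ℕ
  T : ℕ
  blk : Fin n → Fin m
  blk_surj : Function.Surjective blk
  block_size : ∀ b : Fin m, (Finset.univ.filter fun p => blk p = b).card ≤ β
  c : Fin m → ℝ
  c_pos : ∀ b, 0 < c b
  one_le_beta : 1 ≤ β
  beta_le_k : β ≤ k
  k_le_n : k ≤ n
  req : ℕ → Fin n

namespace BlockInstance

variable (I : BlockInstance)

/-- Page `p` is missing at time `τ` according to the set of flushes `S`:
there is a flush `(B(p), t)` with `r(p,τ) < t ≤ τ`, i.e. `t ≤ τ` and
`p` is not requested at any time in `[t, τ] ∩ [1, ∞)`. -/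
def Missing (S : Set (Fin I.m × ℕ)) (τ : ℕ) (p : Fin I.n) : Prop :=
  ∃ t, t ≤ τ ∧ (I.blk p, t) ∈ S ∧ ∀ u, t ≤ u → u ≤ τ → 1 ≤ u → I.req u ≠ p

/-- `f_τ(S) = min (n - k) #{missing pages at τ}`. -/
noncomputable def f (τ : ℕ) (S : Set (Fin I.m × ℕ)) : ℕ :=
  min (I.n - I.k) (Finset.univ.filter fun p => I.Missing S τ p).card

/-- `S` is a set of flushes: all its times lie in `{0,…,T}`. -/
def FlushSet (S : Set (Fin I.m × ℕ)) : Prop := ∀ x ∈ S, x.2 ≤ I.T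

end BlockInstance

/-- For every block-aware caching instance and every time
`τ ∈ {1,…,T}`, the function `f_τ` is submodular on sets of flushes. -/
theorem f_submodular (I : BlockInstance) (τ : ℕ) (hτ1 : 1 ≤ τ) (hτT : τ ≤ I.T)
    (S S' : Set (Fin I.m × ℕ)) (hS : I.FlushSet S) (hS' : I.FlushSet S') :
    I.f τ (S ∪ S') + I.f τ (S ∩ S') ≤ I.f τ S + I.f τ S' := by
  classical
  set A := Finset.univ.filter fun p => I.Missing S τ p with hA
  set B := Finset.univ.filter fun p => I.Missing S' τ p with hB
  have hUnion : (Finset.univ.filter fun p => I.Missing (S ∪ S') τ p) = A ∪ B := by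
    ext p
    simp only [hA, hB, Finset.mem_filter, Finset.mem_union, Finset.mem_univ, true_and]
    constructor
    · rintro ⟨t, h1, (h2 | h2), h3⟩
      · exact Or.inl ⟨t, h1, h2, h3⟩
      · exact Or.inr ⟨t, h1, h2, h3⟩
    · rintro (⟨t, h1, h2, h3⟩ | ⟨t, h1, h2, h3⟩)
      · exact ⟨t, h1, Or.inl h2, h3⟩
      · exact ⟨t, h1, Or.inr h2, h3⟩
  have hInter : (Finset.univ.filter fun p => I.Missing (S ∩ S') τ p) ⊆ A ∩ B := by
    intro p hp
    simp only [Finset.mem_filter, Finset.mem_univ, true_and] at hp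
    obtain ⟨t, h1, ⟨h2, h2'⟩, h3⟩ := hp
    simp only [hA, hB, Finset.mem_inter, Finset.mem_filter, Finset.mem_univ, true_and]
    exact ⟨⟨t, h1, h2, h3⟩, ⟨t, h1, h2', h3⟩⟩
  have hcard : (A ∪ B).card + (A ∩ B).card = A.card + B.card :=
    Finset.card_union_add_card_inter A B
  have hIle : (Finset.univ.filter fun p => I.Missing (S ∩ S') τ p).card ≤ (A ∩ B).card :=
    Finset.card_le_card hInter
  have hAle : A.card ≤ (A ∪ B).card := Finset.card_le_card Finset.subset_union_left
  have hBle : B.card ≤ (A ∪ B).card := Finset.card_le_card Finset.subset_union_right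
  simp only [BlockInstance.f, hUnion]
  rw [← hA, ← hB]
  omega
end

section
/- For every integer β ≥ 1, there exists a block-aware caching instance with blocks of size at most β, unit block costs (c_B = 1 for all B), and a specified initial cache C_0, such that the minimum fetching cost over all cache schedules for the instance is at least β times the minimum eviction cost over all cache schedules, and the minimum eviction cost is strictly positive. -/
open scoped Classical

namespace BlockInstance

variable (I : BlockInstance)

/-- A cache schedule with initial cache `C₀`: `C 0 = C₀`, each cache state
has at most `k` pages, and the request at each time `t ∈ {1,…,T}` is served. -/
def Schedule (C₀ : Finset (Fin I.n)) (C : ℕ → Finset (Fin I.n)) : Prop :=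
  C 0 = C₀ ∧ ∀ t, 1 ≤ t → t ≤ I.T → I.req t ∈ C t ∧ (C t).card ≤ I.k

/-- Fetching cost of a sequence of cache states: at each time, pay `c_B` for
every block `B` meeting `C t \ C (t-1)`. -/
noncomputable def fetchCost (C : ℕ → Finset (Fin I.n)) : ℝ :=
  ∑ t ∈ Finset.Icc 1 I.T,
    ∑ b ∈ Finset.univ.filter
      (fun b : Fin I.m => ∃ p, I.blk p = b ∧ p ∈ C t ∧ p ∉ C (t - 1)), I.c b

/-- Eviction cost of a sequence of cache states: at each time, pay `c_B` for
every block `B` meeting `C (t-1) \ C t`. -/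
noncomputable def evictCost (C : ℕ → Finset (Fin I.n)) : ℝ :=
  ∑ t ∈ Finset.Icc 1 I.T,
    ∑ b ∈ Finset.univ.filter
      (fun b : Fin I.m => ∃ p, I.blk p = b ∧ p ∈ C (t - 1) ∧ p ∉ C t), I.c b

end BlockInstance
/-- The block map of the lower-bound instance. -/
def LBblk (β : ℕ) (p : Fin (2 * β)) : Fin (β + 1) :=
  if p.val < β then ⟨0, by omega⟩
    else ⟨p.val - β + 1, by have := p.isLt; omega⟩

lemma LBblk_small (β : ℕ) (p : Fin (2*β)) (hp : p.val < β) :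
    LBblk β p = ⟨0, by omega⟩ := by
  unfold LBblk; rw [if_pos hp]

lemma LBblk_big (β : ℕ) (p : Fin (2*β)) (hp : ¬ p.val < β) :
    LBblk β p = ⟨p.val - β + 1, by have := p.isLt; omega⟩ := by
  unfold LBblk; rw [if_neg hp]

section Construction

variable (β : ℕ) (hβ : 1 ≤ β)

/-- The lower-bound instance: pages `Fin (2β)`; pages `< β` form one block `0`,
page `β + j` is alone in block `j+1`; cache size `β`; requests `β, β+1, …, 2β-1`
at times `1, …, β`. -/
@[reducible]
noncomputable def LBInst : BlockInstance where
  n := 2 * β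
  m := β + 1
  β := β
  k := β
  T := β
  blk := LBblk β
  blk_surj := by
    intro b
    rcases Nat.eq_zero_or_pos b.val with hb | hb
    · refine ⟨⟨0, by omega⟩, ?_⟩
      rw [LBblk_small β ⟨0, by omega⟩ (by show 0 < β; omega)]
      exact Fin.ext (by simpa using hb.symm)
    · refine ⟨⟨β + b.val - 1, by have := b.isLt; omega⟩, ?_⟩
      rw [LBblk_big β ⟨β + b.val - 1, by have := b.isLt; omega⟩
        (by simp only [Fin.val_mk, not_lt]; omega)]
      exact Fin.ext (by simp only [Fin.val_mk]; have := b.isLt; omega)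
  block_size := by
    intro b
    rcases Nat.eq_zero_or_pos b.val with hb | hb
    · calc (Finset.univ.filter fun p : Fin (2*β) => LBblk β p = b).card
          ≤ (Finset.range β).card := by
            apply Finset.card_le_card_of_injOn (fun p => p.val)
            · intro p hp
              simp only [Finset.mem_coe, Finset.mem_filter] at hp
              simp only [Finset.mem_coe, Finset.mem_range]
              by_contra hc
              rw [LBblk_big β p hc] at hp
              have := congrArg Fin.val hp.2
              simp only [Fin.val_mk] at this
              have := p.isLt
              omega
            · exact Fin.val_injective.injOn
        _ = β := Finset.card_range β
    · refine le_trans ?_ hβ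
      apply Finset.card_le_one.2
      intro p hp q hq
      simp only [Finset.mem_filter] at hp hq
      have hp' : ¬ p.val < β := by
        intro h; rw [LBblk_small β p h] at hp
        have := congrArg Fin.val hp.2; simp only [Fin.val_mk] at this; omega
      have hq' : ¬ q.val < β := by
        intro h; rw [LBblk_small β q h] at hq
        have := congrArg Fin.val hq.2; simp only [Fin.val_mk] at this; omega
      rw [LBblk_big β p hp'] at hp
      rw [LBblk_big β q hq'] at hq
      have h1 := congrArg Fin.val hp.2
      have h2 := congrArg Fin.val hq.2
      simp only [Fin.val_mk] at h1 h2
      exact Fin.ext (by omega)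
  c := fun _ => 1
  c_pos := fun _ => one_pos
  one_le_beta := hβ
  beta_le_k := le_rfl
  k_le_n := by omega
  req := fun t => if h : 1 ≤ t ∧ t ≤ β then ⟨β + t - 1, by omega⟩ else ⟨0, by omega⟩

/-- The initial cache: the big block, i.e. pages `< β`. -/
noncomputable def LBinit : Finset (Fin (2 * β)) :=
  Finset.univ.filter fun p => p.val < β

lemma LBinit_card : (LBinit β).card = β := by
  have : LBinit β = (Finset.range β).attachFin (fun m hm => by
      simp only [Finset.mem_range] at hm; omega) := by
    ext p
    simp [LBinit, Finset.mem_attachFin]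
  rw [this, Finset.card_attachFin, Finset.card_range]

lemma LB_blk_small (p : Fin (2*β)) (hp : p.val < β) :
    (LBInst β hβ).blk p = ⟨0, by show 0 < β + 1; omega⟩ := LBblk_small β p hp

lemma LB_blk_big (p : Fin (2*β)) (hp : ¬ p.val < β) :
    (LBInst β hβ).blk p = ⟨p.val - β + 1, by
      have := p.isLt; show p.val - β + 1 < β + 1; omega⟩ := LBblk_big β p hp

lemma LB_req (t : ℕ) (h1 : 1 ≤ t) (h2 : t ≤ β) :
    (LBInst β hβ).req t = ⟨β + t - 1, by show β + t - 1 < 2 * β; omega⟩ := by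
  simp only [LBInst]
  rw [dif_pos ⟨h1, h2⟩]

/-- Every schedule pays eviction cost at least 1. -/
lemma LB_evict_lb (C : ℕ → Finset (Fin (2*β)))
    (hC : (LBInst β hβ).Schedule (LBinit β) C) :
    1 ≤ (LBInst β hβ).evictCost C := by
  obtain ⟨h0, hC⟩ := hC
  obtain ⟨hreq, hcard⟩ := hC 1 le_rfl (by exact hβ)
  -- there is a page of the initial cache evicted at time 1
  have hq : ((LBInst β hβ).req 1) ∉ LBinit β := by
    rw [LB_req β hβ 1 le_rfl hβ]
    simp only [LBinit, Finset.mem_filter, Finset.mem_univ, true_and, Fin.val_mk, not_lt]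
    omega
  have hex : ∃ p ∈ LBinit β, p ∉ C 1 := by
    by_contra hcon
    push_neg at hcon
    have hsub : insert ((LBInst β hβ).req 1) (LBinit β) ⊆ C 1 := by
      intro x hx
      rcases Finset.mem_insert.1 hx with h | h
      · exact h ▸ hreq
      · exact hcon x h
    have := Finset.card_le_card hsub
    rw [Finset.card_insert_of_notMem hq, LBinit_card] at this
    have : β + 1 ≤ β := le_trans this hcard
    omega
  obtain ⟨p, hpmem, hpnot⟩ := hex
  have hp : p.val < β := by simpa [LBinit] using hpmem
  -- the big block is evicted at time 1
  have hmem1 : (⟨0, by omega⟩ : Fin (β+1)) ∈ Finset.univ.filter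
      (fun b : Fin ((LBInst β hβ).m) => ∃ p, (LBInst β hβ).blk p = b ∧
        p ∈ C (1 - 1) ∧ p ∉ C 1) := by
    refine Finset.mem_filter.2 ⟨Finset.mem_univ _, p, LB_blk_small β hβ p hp, ?_, hpnot⟩
    simpa [h0, LBinit] using hp
  unfold BlockInstance.evictCost
  have hterm : (1:ℝ) ≤ ∑ b ∈ Finset.univ.filter
      (fun b : Fin ((LBInst β hβ).m) => ∃ p, (LBInst β hβ).blk p = b ∧
        p ∈ C (1 - 1) ∧ p ∉ C 1), (LBInst β hβ).c b := by
    have : ∀ b, (LBInst β hβ).c b = 1 := fun _ => rfl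
    rw [Finset.sum_congr rfl fun b _ => this b, Finset.sum_const, nsmul_eq_mul, mul_one]
    exact_mod_cast Finset.card_pos.2 ⟨_, hmem1⟩
  refine le_trans hterm ?_
  refine Finset.single_le_sum
    (f := fun t => ∑ b ∈ Finset.univ.filter
      (fun b : Fin ((LBInst β hβ).m) => ∃ p, (LBInst β hβ).blk p = b ∧
        p ∈ C (t - 1) ∧ p ∉ C t), (LBInst β hβ).c b)
    (fun t _ => ?_) (Finset.mem_Icc.2 ⟨le_rfl, hβ⟩)
  exact Finset.sum_nonneg fun b _ => le_of_lt ((LBInst β hβ).c_pos b)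

/-- Every schedule pays fetching cost at least β. -/
lemma LB_fetch_lb (C : ℕ → Finset (Fin (2*β)))
    (hC : (LBInst β hβ).Schedule (LBinit β) C) :
    (β : ℝ) ≤ (LBInst β hβ).fetchCost C := by
  obtain ⟨h0, hC⟩ := hC
  set filt : ℕ → Finset (Fin (β+1)) := fun t => Finset.univ.filter
      (fun b : Fin ((LBInst β hβ).m) => ∃ p, (LBInst β hβ).blk p = b ∧
        p ∈ C t ∧ p ∉ C (t - 1)) with hfilt
  -- every nonzero block appears in some filter set
  have key : ∀ b : Fin (β+1), b ≠ 0 → b ∈ (Finset.Icc 1 β).biUnion filt := by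
    intro b hb
    have hb1 : 1 ≤ b.val := by
      rcases Nat.eq_zero_or_pos b.val with h | h
      · exact absurd (Fin.ext h) hb
      · exact h
    have hbβ : b.val ≤ β := by have := b.isLt; omega
    set q : Fin (2*β) := ⟨β + b.val - 1, by omega⟩ with hqdef
    have hblkq : (LBInst β hβ).blk q = b := by
      rw [LB_blk_big β hβ q (by simp [hqdef]; omega)]
      exact Fin.ext (by simp [hqdef]; omega)
    have hqmem : q ∈ C b.val := by
      have := (hC b.val hb1 hbβ).1
      rwa [LB_req β hβ b.val hb1 hbβ] at this
    have hq0 : q ∉ C 0 := by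
      rw [h0]
      simp only [hqdef, LBinit, Finset.mem_filter, Finset.mem_univ, true_and, not_lt,
        Fin.val_mk]
      omega
    have hexist : ∃ t, q ∈ C t := ⟨b.val, hqmem⟩
    set t0 := Nat.find hexist with ht0
    have ht0le : t0 ≤ b.val := Nat.find_le hqmem
    have ht0pos : 1 ≤ t0 := by
      rcases Nat.eq_zero_or_pos t0 with h | h
      · exact absurd (h ▸ Nat.find_spec hexist) hq0
      · exact h
    have hnot : q ∉ C (t0 - 1) := Nat.find_min hexist (by omega)
    refine Finset.mem_biUnion.2 ⟨t0, Finset.mem_Icc.2 ⟨ht0pos, le_trans ht0le hbβ⟩, ?_⟩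
    exact Finset.mem_filter.2 ⟨Finset.mem_univ _, q, hblkq, Nat.find_spec hexist, hnot⟩
  have hsub : Finset.univ.erase (0 : Fin (β+1)) ⊆ (Finset.Icc 1 β).biUnion filt := by
    intro b hb
    exact key b (Finset.ne_of_mem_erase hb)
  have hcard : β ≤ ∑ t ∈ Finset.Icc 1 β, (filt t).card := by
    calc β = (Finset.univ.erase (0 : Fin (β+1))).card := by
            rw [Finset.card_erase_of_mem (Finset.mem_univ _)]
            simp
      _ ≤ ((Finset.Icc 1 β).biUnion filt).card := Finset.card_le_card hsub
      _ ≤ ∑ t ∈ Finset.Icc 1 β, (filt t).card := Finset.card_biUnion_le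
  unfold BlockInstance.fetchCost
  have hc1 : ∀ b, (LBInst β hβ).c b = 1 := fun _ => rfl
  calc (β : ℝ) ≤ ((∑ t ∈ Finset.Icc 1 β, (filt t).card : ℕ) : ℝ) := by exact_mod_cast hcard
    _ = ∑ t ∈ Finset.Icc 1 β, ∑ b ∈ filt t, (LBInst β hβ).c b := by
        rw [Nat.cast_sum]
        refine Finset.sum_congr rfl fun t _ => ?_
        rw [Finset.sum_congr rfl fun b _ => hc1 b, Finset.sum_const, nsmul_eq_mul, mul_one]
    _ = _ := rfl

/-- The witness schedule: swap in all the singleton pages at time 1. -/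
noncomputable def LBsched : ℕ → Finset (Fin (2*β)) := fun t =>
  if t = 0 then LBinit β else Finset.univ.filter fun p => β ≤ p.val

lemma LBsched_card : (Finset.univ.filter fun p : Fin (2*β) => β ≤ p.val).card = β := by
  have : (Finset.univ.filter fun p : Fin (2*β) => β ≤ p.val)
      = (Finset.Ico β (2*β)).attachFin (fun m hm => (Finset.mem_Ico.1 hm).2) := by
    ext p
    have := p.isLt
    simp only [Finset.mem_filter, Finset.mem_univ, true_and, Finset.mem_attachFin,
      Finset.mem_Ico]
    omega
  rw [this, Finset.card_attachFin, Nat.card_Ico]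
  omega

lemma LBsched_isSched : (LBInst β hβ).Schedule (LBinit β) (LBsched β) := by
  constructor
  · simp [LBsched]
  · intro t h1 h2
    have ht : ¬ (t = 0) := by omega
    constructor
    · simp only [LBsched, if_neg ht]
      rw [dif_pos ⟨h1, h2⟩]
      simp only [Finset.mem_filter, Finset.mem_univ, true_and, Fin.val_mk]
      omega
    · simp only [LBsched, if_neg ht]
      rw [LBsched_card]

lemma LBsched_evict : (LBInst β hβ).evictCost (LBsched β) ≤ 1 := by
  unfold BlockInstance.evictCost
  have hc1 : ∀ b, (LBInst β hβ).c b = 1 := fun _ => rfl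
  have hbound : ∀ t ∈ Finset.Icc 1 β,
      (∑ b ∈ Finset.univ.filter
        (fun b : Fin ((LBInst β hβ).m) => ∃ p, (LBInst β hβ).blk p = b ∧
          p ∈ LBsched β (t - 1) ∧ p ∉ LBsched β t), (LBInst β hβ).c b)
      ≤ if t = 1 then 1 else 0 := by
    intro t ht
    rw [Finset.mem_Icc] at ht
    by_cases h1 : t = 1
    · subst h1
      simp only [if_pos rfl]
      have hsub : (Finset.univ.filter
          (fun b : Fin ((LBInst β hβ).m) => ∃ p, (LBInst β hβ).blk p = b ∧
            p ∈ LBsched β (1 - 1) ∧ p ∉ LBsched β 1)) ⊆ {⟨0, by show 0 < β + 1; omega⟩} := by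
        intro b hb
        obtain ⟨-, p, hblk, hpmem, -⟩ := Finset.mem_filter.1 hb
        have hp : p.val < β := by
          simpa [LBsched, LBinit] using hpmem
        rw [LB_blk_small β hβ p hp] at hblk
        simp [← hblk]
      calc _ ≤ ∑ b ∈ ({⟨0, by omega⟩} : Finset (Fin (β + 1))), (LBInst β hβ).c b :=
            Finset.sum_le_sum_of_subset_of_nonneg hsub
              (fun b _ _ => le_of_lt ((LBInst β hβ).c_pos b))
        _ = 1 := by rw [Finset.sum_singleton]
    · simp only [if_neg h1]
      have hempty : (Finset.univ.filter
          (fun b : Fin ((LBInst β hβ).m) => ∃ p, (LBInst β hβ).blk p = b ∧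
            p ∈ LBsched β (t - 1) ∧ p ∉ LBsched β t)) = ∅ := by
        refine Finset.filter_false_of_mem fun b _ => ?_
        rintro ⟨p, -, hpmem, hpnot⟩
        have h2 : ¬ (t = 0) := by omega
        have h3 : ¬ (t - 1 = 0) := by omega
        rw [LBsched, if_neg h3] at hpmem
        rw [LBsched, if_neg h2] at hpnot
        exact hpnot hpmem
      rw [hempty, Finset.sum_empty]
  calc _ ≤ ∑ t ∈ Finset.Icc 1 β, (if t = 1 then (1:ℝ) else 0) :=
        Finset.sum_le_sum hbound
    _ = 1 := by
        rw [Finset.sum_ite_eq' (Finset.Icc 1 β) 1 (fun _ => (1:ℝ))]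
        rw [if_pos (Finset.mem_Icc.2 ⟨le_rfl, hβ⟩)]

end Construction
/-- for every `β ≥ 1` there is a block-aware caching instance with
unit block costs and an initial cache for which the optimal fetching cost is at
least `β` times the optimal eviction cost, and the optimal eviction cost is
strictly positive. -/
theorem fetch_ge_beta_mul_evict (β : ℕ) (hβ : 1 ≤ β) :
    ∃ (I : BlockInstance) (C₀ : Finset (Fin I.n)),
      I.β = β ∧ (∀ b, I.c b = 1) ∧ C₀.card ≤ I.k ∧
      0 < sInf {r : ℝ | ∃ C, I.Schedule C₀ C ∧ I.evictCost C = r} ∧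
      (β : ℝ) * sInf {r : ℝ | ∃ C, I.Schedule C₀ C ∧ I.evictCost C = r} ≤
        sInf {r : ℝ | ∃ C, I.Schedule C₀ C ∧ I.fetchCost C = r} := by

  classical
  refine ⟨LBInst β hβ, LBinit β, rfl, fun _ => rfl, ?_, ?_, ?_⟩
  · rw [LBinit_card]
  · -- 0 < sInf evict set
    have hne : {r : ℝ | ∃ C, (LBInst β hβ).Schedule (LBinit β) C ∧
        (LBInst β hβ).evictCost C = r}.Nonempty :=
      ⟨_, LBsched β, LBsched_isSched β hβ, rfl⟩
    have hlb : ∀ r ∈ {r : ℝ | ∃ C, (LBInst β hβ).Schedule (LBinit β) C ∧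
        (LBInst β hβ).evictCost C = r}, (1:ℝ) ≤ r := by
      rintro r ⟨C, hC, rfl⟩
      exact LB_evict_lb β hβ C hC
    have := le_csInf hne hlb
    linarith
  · -- β * sInf evict ≤ sInf fetch
    have hlb : ∀ r ∈ {r : ℝ | ∃ C, (LBInst β hβ).Schedule (LBinit β) C ∧
        (LBInst β hβ).evictCost C = r}, (1:ℝ) ≤ r := by
      rintro r ⟨C, hC, rfl⟩
      exact LB_evict_lb β hβ C hC
    have hEle : sInf {r : ℝ | ∃ C, (LBInst β hβ).Schedule (LBinit β) C ∧
        (LBInst β hβ).evictCost C = r} ≤ 1 := by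
      refine le_trans (csInf_le ⟨1, hlb⟩ ?_) (LBsched_evict β hβ)
      exact ⟨LBsched β, LBsched_isSched β hβ, rfl⟩
    have hFne : {r : ℝ | ∃ C, (LBInst β hβ).Schedule (LBinit β) C ∧
        (LBInst β hβ).fetchCost C = r}.Nonempty :=
      ⟨_, LBsched β, LBsched_isSched β hβ, rfl⟩
    have hFlb : (β:ℝ) ≤ sInf {r : ℝ | ∃ C, (LBInst β hβ).Schedule (LBinit β) C ∧
        (LBInst β hβ).fetchCost C = r} := by
      refine le_csInf hFne ?_
      rintro r ⟨C, hC, rfl⟩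
      exact LB_fetch_lb β hβ C hC
    calc (β:ℝ) * sInf {r : ℝ | ∃ C, (LBInst β hβ).Schedule (LBinit β) C ∧
          (LBInst β hβ).evictCost C = r}
        ≤ (β:ℝ) * 1 := by
          exact mul_le_mul_of_nonneg_left hEle (Nat.cast_nonneg β)
      _ = (β:ℝ) := mul_one _
      _ ≤ _ := hFlb
end

section
/- For every integer β ≥ 1, there exists a block-aware caching instance with blocks of size at most β, unit block costs (c_B = 1 for all B), and a specified initial cache C_0, such that the minimum eviction cost over all cache schedules for the instance is at least β times the minimum fetching cost over all cache schedules, and the minimum fetching cost is strictly positive. -/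
open scoped Classical

/-!
Take `β` singleton blocks, which form the initial cache, and one block of `β` further pages,
requested cyclically in `β` rounds of `β` requests. Fetching the big block at time 1 costs 1, and
every schedule must fetch something at time 1. As for evictions: if some round contains none, then
at its end all big pages are cached and fill the cache, so all `β` singleton blocks have been
evicted by then; otherwise each of the `β` rounds contains an eviction.
-/

theorem Nat.exists_mem_Ioc_pred_and_not {P : ℕ → Prop} {a b : ℕ} (hab : a ≤ b) (ha : P a)
    (hb : ¬ P b) : ∃ t ∈ Finset.Ioc a b, P (t - 1) ∧ ¬ P t := by
  induction b, hab using Nat.le_induction with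
  | base => exact absurd ha hb
  | succ b hab ih =>
    by_cases hPb : P b
    · exact ⟨b + 1, Finset.mem_Ioc.2 ⟨by omega, le_rfl⟩, hPb, hb⟩
    · obtain ⟨t, ht, hPt⟩ := ih hPb
      exact ⟨t, Finset.Ioc_subset_Ioc_right b.le_succ ht, hPt⟩

namespace BlockInstance

section

variable (I : BlockInstance)

def evictedBlocks (C : ℕ → Finset (Fin I.n)) (t : ℕ) : Finset (Fin I.m) :=
  Finset.univ.filter fun b => ∃ p, I.blk p = b ∧ p ∈ C (t - 1) ∧ p ∉ C t

def fetchedBlocks (C : ℕ → Finset (Fin I.n)) (t : ℕ) : Finset (Fin I.m) :=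
  Finset.univ.filter fun b => ∃ p, I.blk p = b ∧ p ∈ C t ∧ p ∉ C (t - 1)

variable {I}

theorem fetchCost_eq_sum (C : ℕ → Finset (Fin I.n)) :
    I.fetchCost C = ∑ t ∈ Finset.Icc 1 I.T, ∑ b ∈ I.fetchedBlocks C t, I.c b :=
  rfl

theorem evictCost_eq_sum (C : ℕ → Finset (Fin I.n)) :
    I.evictCost C = ∑ t ∈ Finset.Icc 1 I.T, ∑ b ∈ I.evictedBlocks C t, I.c b :=
  rfl

theorem blk_mem_evictedBlocks {C : ℕ → Finset (Fin I.n)} {t : ℕ} {p : Fin I.n}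
    (hp : p ∈ C (t - 1)) (hp' : p ∉ C t) : I.blk p ∈ I.evictedBlocks C t :=
  Finset.mem_filter.2 ⟨Finset.mem_univ _, p, rfl, hp, hp'⟩

theorem blk_mem_fetchedBlocks {C : ℕ → Finset (Fin I.n)} {t : ℕ} {p : Fin I.n}
    (hp : p ∈ C t) (hp' : p ∉ C (t - 1)) : I.blk p ∈ I.fetchedBlocks C t :=
  Finset.mem_filter.2 ⟨Finset.mem_univ _, p, rfl, hp, hp'⟩

theorem exists_blk_mem_evictedBlocks {C : ℕ → Finset (Fin I.n)} {a b : ℕ} {p : Fin I.n}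
    (hab : a ≤ b) (ha : p ∈ C a) (hb : p ∉ C b) :
    ∃ t ∈ Finset.Ioc a b, I.blk p ∈ I.evictedBlocks C t := by
  obtain ⟨t, ht, hp, hp'⟩ := Nat.exists_mem_Ioc_pred_and_not (P := (p ∈ C ·)) hab ha hb
  exact ⟨t, ht, blk_mem_evictedBlocks hp hp'⟩

theorem req_mem_of_evictedBlocks_eq_empty {C₀ : Finset (Fin I.n)} {C : ℕ → Finset (Fin I.n)}
    (hC : I.Schedule C₀ C) {s b : ℕ} (hs : 1 ≤ s) (hsb : s ≤ b) (hbT : b ≤ I.T)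
    (hquiet : ∀ t ∈ Finset.Ioc s b, I.evictedBlocks C t = ∅) : I.req s ∈ C b := by
  by_contra hb
  obtain ⟨t, ht, hev⟩ :=
    exists_blk_mem_evictedBlocks hsb (hC.2 s hs (hsb.trans hbT)).1 hb
  simp [hquiet t ht] at hev

theorem c_le_fetchCost {C : ℕ → Finset (Fin I.n)} {t : ℕ} (ht : t ∈ Finset.Icc 1 I.T)
    {b : Fin I.m} (hb : b ∈ I.fetchedBlocks C t) : I.c b ≤ I.fetchCost C := by
  have hc : ∀ b, 0 ≤ I.c b := fun b => (I.c_pos b).le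
  calc I.c b ≤ ∑ b ∈ I.fetchedBlocks C t, I.c b :=
        Finset.single_le_sum (fun b _ => hc b) hb
    _ ≤ I.fetchCost C := by
        rw [fetchCost_eq_sum]
        exact Finset.single_le_sum (f := fun t => ∑ b ∈ I.fetchedBlocks C t, I.c b)
          (fun _ _ => Finset.sum_nonneg fun b _ => hc b) ht

theorem sum_le_evictCost {C : ℕ → Finset (Fin I.n)} (E : Finset (ℕ × Fin I.m))
    (hE : ∀ x ∈ E, x.1 ∈ Finset.Icc 1 I.T ∧ x.2 ∈ I.evictedBlocks C x.1) :
    ∑ x ∈ E, I.c x.2 ≤ I.evictCost C := by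
  set events := (Finset.Icc 1 I.T ×ˢ Finset.univ).filter fun x => x.2 ∈ I.evictedBlocks C x.1
  rw [evictCost_eq_sum, ← Finset.sum_finset_product events _ _ (f := fun x => I.c x.2)
    (by simp [events])]
  refine Finset.sum_le_sum_of_subset_of_nonneg (fun x hx => ?_) fun b _ _ => (I.c_pos _).le
  simpa [events] using hE x hx

end

section

variable (β : ℕ)

def smallPages : Finset (Fin (2 * β)) := Finset.univ.filter fun p => p.val < β

def bigPages : Finset (Fin (2 * β)) := Finset.univ.filter fun p => β ≤ p.val

theorem card_smallPages : (smallPages β).card = β := by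
  rw [smallPages, Fin.card_filter_val_lt]
  omega

theorem card_bigPages : (bigPages β).card = β := by
  have hcompl : bigPages β = (smallPages β)ᶜ := by
    ext
    simp [bigPages, smallPages]
  rw [hcompl, Finset.card_compl, card_smallPages, Fintype.card_fin]
  omega

abbrev cyclicInstance (hβ : 1 ≤ β) : BlockInstance where
  n := 2 * β
  m := β + 1
  β := β
  k := β
  T := β * β
  blk p := ⟨min p.val β, by omega⟩
  blk_surj b := ⟨⟨b.val, by omega⟩, Fin.ext (by simp; omega)⟩
  block_size b := by
    refine (Finset.card_le_card_of_injOn (fun p => (⟨p.val - β, by omega⟩ : Fin β))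
      (fun _ _ => Finset.mem_univ _) fun p hp q hq hpq => ?_).trans (by simp)
    simp only [Finset.coe_filter, Finset.mem_univ, true_and, Set.mem_ofPred_eq, Fin.ext_iff]
      at hp hq hpq
    ext
    omega
  c _ := 1
  c_pos _ := one_pos
  one_le_beta := hβ
  beta_le_k := le_rfl
  k_le_n := by omega
  req t := ⟨β + (t - 1) % β, by have := Nat.mod_lt (t - 1) (by omega : 0 < β); omega⟩

def fetchBigBlock (t : ℕ) : Finset (Fin (2 * β)) :=
  if t = 0 then smallPages β else bigPages β

end

section cyclicInstance

variable {β : ℕ} (hβ : 1 ≤ β)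

theorem cyclicInstance_req (j : ℕ) {p : Fin (2 * β)} (hp : β ≤ p.val) :
    (cyclicInstance β hβ).req (j * β + (p.val - β) + 1) = p := by
  have hlt : p.val - β < β := by omega
  ext
  simp only [Nat.add_sub_cancel, add_comm (j * β), Nat.add_mul_mod_self_right,
    Nat.mod_eq_of_lt hlt]
  omega

theorem cyclicInstance_blk_injOn :
    Set.InjOn (cyclicInstance β hβ).blk (smallPages β) := fun p hp q hq hpq => by
  simp only [smallPages, Finset.coe_filter, Finset.mem_univ, true_and, Set.mem_ofPred_eq,
    Fin.ext_iff] at hp hq hpq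
  ext
  omega

theorem schedule_fetchBigBlock :
    (cyclicInstance β hβ).Schedule (smallPages β) (fetchBigBlock β) := by
  refine ⟨rfl, fun t ht _ => ?_⟩
  simp only [fetchBigBlock, if_neg (by omega : t ≠ 0), card_bigPages, le_rfl, and_true]
  simp only [bigPages, Finset.mem_filter, Finset.mem_univ, true_and]
  omega

theorem one_mem_Icc_T : 1 ∈ Finset.Icc 1 (cyclicInstance β hβ).T :=
  Finset.mem_Icc.2 ⟨le_rfl, Nat.one_le_iff_ne_zero.2 (by positivity)⟩

theorem fetchCost_fetchBigBlock : (cyclicInstance β hβ).fetchCost (fetchBigBlock β) = 1 := by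
  have hfetch1 :
      (cyclicInstance β hβ).fetchedBlocks (fetchBigBlock β) 1 = {⟨β, β.lt_succ_self⟩} := by
    ext b
    simp only [fetchedBlocks, fetchBigBlock, Nat.sub_self, if_pos, one_ne_zero, if_false,
      bigPages, smallPages, Finset.mem_filter, Finset.mem_univ, true_and, not_lt,
      Finset.mem_singleton, Fin.ext_iff]
    exact ⟨fun ⟨p, hpb, hp, _⟩ => by omega,
      fun hb => ⟨⟨β, by omega⟩, by simp [hb], le_rfl, le_rfl⟩⟩
  have hfetch : ∀ t ∈ Finset.Icc 1 (cyclicInstance β hβ).T, t ≠ 1 →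
      (cyclicInstance β hβ).fetchedBlocks (fetchBigBlock β) t = ∅ := by
    intro t ht ht1
    have := Finset.mem_Icc.1 ht
    simp [fetchedBlocks, fetchBigBlock, show t ≠ 0 by omega, show t - 1 ≠ 0 by omega]
  rw [fetchCost_eq_sum, Finset.sum_eq_single_of_mem 1 (one_mem_Icc_T hβ)
    fun t ht ht1 => by rw [hfetch t ht ht1, Finset.sum_empty], hfetch1, Finset.sum_singleton]

theorem one_le_fetchCost {C : ℕ → Finset (Fin (2 * β))}
    (hC : (cyclicInstance β hβ).Schedule (smallPages β) C) :
    1 ≤ (cyclicInstance β hβ).fetchCost C := by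
  have hT := one_mem_Icc_T hβ
  have hreq := (hC.2 1 le_rfl (Finset.mem_Icc.1 hT).2).1
  have hnot : (cyclicInstance β hβ).req 1 ∉ C (1 - 1) := by
    simp [hC.1, smallPages]
  exact c_le_fetchCost hT (blk_mem_fetchedBlocks hreq hnot)

theorem isLeast_fetchCost :
    IsLeast {r | ∃ C, (cyclicInstance β hβ).Schedule (smallPages β) C ∧
      (cyclicInstance β hβ).fetchCost C = r} 1 :=
  ⟨⟨_, schedule_fetchBigBlock hβ, fetchCost_fetchBigBlock hβ⟩,
    fun _ ⟨_, hC, hr⟩ => hr ▸ one_le_fetchCost hβ hC⟩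

variable {C : ℕ → Finset (Fin (2 * β))}

theorem le_evictCost_of_forall_window_nonempty
    (hwin : ∀ j < β, ∃ t ∈ Finset.Ioc (j * β) (j * β + β),
      ((cyclicInstance β hβ).evictedBlocks C t).Nonempty) :
    β ≤ (cyclicInstance β hβ).evictCost C := by
  choose! t ht b hb using hwin
  have hwindow : ∀ j < β, (t j - 1) / β = j := fun j hj => by
    have := Finset.mem_Ioc.1 (ht j hj)
    exact Nat.div_eq_of_lt_le (by omega) (by rw [add_one_mul]; omega)
  have hinj : Set.InjOn (fun j => (t j, b j)) (Finset.range β) := fun i hi j hj hij => by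
    rw [← hwindow i (Finset.mem_range.1 hi), ← hwindow j (Finset.mem_range.1 hj),
      (Prod.mk.inj hij).1]
  have hE := sum_le_evictCost ((Finset.range β).image fun j => (t j, b j)) <| by
    simp only [Finset.mem_image, Finset.mem_range, Finset.mem_Icc, forall_exists_index, and_imp]
    rintro _ j hj rfl
    have := Finset.mem_Ioc.1 (ht j hj)
    exact ⟨⟨by omega, by nlinarith⟩, hb j hj⟩
  simpa [Finset.card_image_of_injOn hinj] using hE

theorem le_evictCost_of_eq_bigPages (hC : (cyclicInstance β hβ).Schedule (smallPages β) C)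
    {s : ℕ} (hs : s ≤ β * β) (hCs : C s = bigPages β) :
    β ≤ (cyclicInstance β hβ).evictCost C := by
  have hevict : ∀ p ∈ smallPages β, ∃ t ∈ Finset.Ioc 0 s,
      (cyclicInstance β hβ).blk p ∈ (cyclicInstance β hβ).evictedBlocks C t := fun p hp =>
    exists_blk_mem_evictedBlocks (Nat.zero_le s) (hC.1 ▸ hp) <| by
      simp_all [smallPages, bigPages]
  choose! t ht hev using hevict
  have hinj : Set.InjOn (fun p => (t p, (cyclicInstance β hβ).blk p)) (smallPages β) :=
    fun p hp q hq hpq => cyclicInstance_blk_injOn hβ hp hq (Prod.mk.inj hpq).2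
  have hE := sum_le_evictCost
      ((smallPages β).image fun p => (t p, (cyclicInstance β hβ).blk p)) <| by
    simp only [Finset.mem_image, Finset.mem_Icc, forall_exists_index, and_imp]
    rintro _ p hp rfl
    have := Finset.mem_Ioc.1 (ht p hp)
    exact ⟨⟨by omega, by simpa using this.2.trans hs⟩, hev p hp⟩
  simpa [Finset.card_image_of_injOn hinj, card_smallPages] using hE

theorem eq_bigPages_of_window_eq_empty (hC : (cyclicInstance β hβ).Schedule (smallPages β) C)
    {j : ℕ} (hj : j < β)
    (hquiet : ∀ t ∈ Finset.Ioc (j * β) (j * β + β),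
      (cyclicInstance β hβ).evictedBlocks C t = ∅) :
    C (j * β + β) = bigPages β := by
  have hend : j * β + β ≤ β * β := by nlinarith
  have hsub : bigPages β ⊆ C (j * β + β) := fun p hp => by
    have hp : β ≤ p.val := (Finset.mem_filter.1 hp).2
    rw [← cyclicInstance_req hβ j hp]
    exact req_mem_of_evictedBlocks_eq_empty hC (by omega) (by omega) hend fun t ht =>
      hquiet t (Finset.Ioc_subset_Ioc_left (by omega) ht)
  refine (Finset.eq_of_subset_of_card_le hsub ?_).symm
  rw [card_bigPages]
  exact (hC.2 _ (by omega) hend).2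

theorem le_evictCost (hC : (cyclicInstance β hβ).Schedule (smallPages β) C) :
    β ≤ (cyclicInstance β hβ).evictCost C := by
  by_cases hwin : ∀ j < β, ∃ t ∈ Finset.Ioc (j * β) (j * β + β),
      ((cyclicInstance β hβ).evictedBlocks C t).Nonempty
  · exact le_evictCost_of_forall_window_nonempty hβ hwin
  · push Not at hwin
    obtain ⟨j, hj, hquiet⟩ := hwin
    exact le_evictCost_of_eq_bigPages hβ hC (by nlinarith)
      (eq_bigPages_of_window_eq_empty hβ hC hj hquiet)

end cyclicInstance

end BlockInstance

/-- for every `β ≥ 1` there is a block-aware caching instance with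
unit block costs and an initial cache for which the optimal eviction cost is at
least `β` times the optimal fetching cost, and the optimal fetching cost is
strictly positive. -/
theorem evict_ge_beta_mul_fetch (β : ℕ) (hβ : 1 ≤ β) :
    ∃ (I : BlockInstance) (C₀ : Finset (Fin I.n)),
      I.β = β ∧ (∀ b, I.c b = 1) ∧ C₀.card ≤ I.k ∧
      0 < sInf {r : ℝ | ∃ C, I.Schedule C₀ C ∧ I.fetchCost C = r} ∧
      (β : ℝ) * sInf {r : ℝ | ∃ C, I.Schedule C₀ C ∧ I.fetchCost C = r} ≤
        sInf {r : ℝ | ∃ C, I.Schedule C₀ C ∧ I.evictCost C = r} := by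
  refine ⟨.cyclicInstance β hβ, BlockInstance.smallPages β, rfl, fun _ => rfl,
    (BlockInstance.card_smallPages β).le, ?_⟩
  rw [(BlockInstance.isLeast_fetchCost hβ).csInf_eq, mul_one]
  exact ⟨one_pos, le_csInf ⟨_, _, BlockInstance.schedule_fetchBigBlock hβ, rfl⟩
    fun _ ⟨_, hC, hr⟩ => hr ▸ BlockInstance.le_evictCost hβ hC⟩
end

section
/- Let U be a finite set, f : 2^U → ℝ a submodular function, S ⊆ U, x : U → [0,1], r ∈ ℝ, and v₀ ∈ U ∖ S with x(v₀) = 1. If ∑_{v ∈ U} (f(S ∪ {v}) − f(S)) · x(v) < r − f(S), then ∑_{v ∈ U, v ≠ v₀} (f(S ∪ {v₀, v}) − f(S ∪ {v₀})) · x(v) < r − f(S ∪ {v₀}). -/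
open scoped Classical

/-- if `f` is submodular, `x : U → [0,1]`, `v₀ ∉ S` has `x v₀ = 1`,
and the covering constraint for `S` is violated, then the covering constraint
for `S ∪ {v₀}` (with `v₀` dropped from the sum) is also violated. -/
theorem violated_constraint_insert {U : Type*} [Fintype U] (f : Set U → ℝ)
    (hsub : ∀ A B : Set U, f (A ∪ B) + f (A ∩ B) ≤ f A + f B)
    (S : Set U) (x : U → ℝ) (hx : ∀ v, x v ∈ Set.Icc (0 : ℝ) 1)
    (r : ℝ) (v₀ : U) (hv₀ : v₀ ∉ S) (hxv₀ : x v₀ = 1)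
    (h : ∑ v : U, (f (insert v S) - f S) * x v < r - f S) :
    ∑ v ∈ Finset.univ.filter (fun v => v ≠ v₀),
        (f (insert v (insert v₀ S)) - f (insert v₀ S)) * x v
      < r - f (insert v₀ S) := by
  have hkey : ∀ v ∈ Finset.univ.filter (fun v => v ≠ v₀),
      (f (insert v (insert v₀ S)) - f (insert v₀ S)) * x v
        ≤ (f (insert v S) - f S) * x v := by
    intro v hv
    rw [Finset.mem_filter] at hv
    have hvne : v ≠ v₀ := hv.2
    have hU : insert v S ∪ insert v₀ S = insert v (insert v₀ S) := by
      ext a; simp [Set.mem_insert_iff]; tauto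
    have hI : insert v S ∩ insert v₀ S = S := by
      ext a; simp only [Set.mem_inter_iff, Set.mem_insert_iff]
      constructor
      · rintro ⟨h1 | h1, h2 | h2⟩ <;> try assumption
        exact absurd (h1.symm.trans h2) hvne
      · intro ha; exact ⟨Or.inr ha, Or.inr ha⟩
    have := hsub (insert v S) (insert v₀ S)
    rw [hU, hI] at this
    have hmarg : f (insert v (insert v₀ S)) - f (insert v₀ S)
        ≤ f (insert v S) - f S := by linarith
    exact mul_le_mul_of_nonneg_right hmarg (hx v).1
  have h1 : ∑ v ∈ Finset.univ.filter (fun v => v ≠ v₀),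
      (f (insert v (insert v₀ S)) - f (insert v₀ S)) * x v
        ≤ ∑ v ∈ Finset.univ.filter (fun v => v ≠ v₀),
      (f (insert v S) - f S) * x v := Finset.sum_le_sum hkey
  have h2 : ∑ v ∈ Finset.univ.filter (fun v => v ≠ v₀),
      (f (insert v S) - f S) * x v
        = (∑ v : U, (f (insert v S) - f S) * x v)
          - (f (insert v₀ S) - f S) * x v₀ := by
    rw [Finset.filter_ne']
    rw [Finset.sum_erase_eq_sub (Finset.mem_univ v₀)]
  rw [h2, hxv₀] at h1
  linarith
end

section
/- Let φ ∈ [0,1]^{𝓑 × {0,…,T}} be a vector of flush variables for a block-aware caching instance. Call a constraint (S, τ) maximal-integral if S contains every (B,t) with φ_B^t = 1. If for every τ ∈ {1,…,T} and every maximal-integral set S the constraint ∑_{(B,t)} (f_τ(S ∪ {(B,t)}) − f_τ(S)) · φ_B^t ≥ n − k − f_τ(S) holds, then φ satisfies this constraint for every set of flushes S and every τ ∈ {1,…,T}, i.e., φ is feasible for the LP (P). -/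
open scoped Classical

namespace BlockInstance

variable (I : BlockInstance)

/-- Left-hand side of the LP (P) constraint for flush set `S` and time `τ`:
`∑_{(B,t) ∈ 𝓑 × {0,…,T}} (f_τ(S ∪ {(B,t)}) − f_τ(S)) · φ_B^t`. -/
noncomputable def lhs (φ : Fin I.m × ℕ → ℝ) (S : Set (Fin I.m × ℕ)) (τ : ℕ) : ℝ :=
  ∑ B : Fin I.m, ∑ t ∈ Finset.range (I.T + 1),
    ((I.f τ (insert (B, t) S) : ℝ) - (I.f τ S : ℝ)) * φ (B, t)

/-- `φ` is feasible for the LP (P): coordinates in `[0,1]` and every covering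
constraint holds. -/
def FeasibleLP (φ : Fin I.m × ℕ → ℝ) : Prop :=
  (∀ (B : Fin I.m) (t : ℕ), t ≤ I.T → φ (B, t) ∈ Set.Icc (0 : ℝ) 1) ∧
  ∀ τ, 1 ≤ τ → τ ≤ I.T → ∀ S : Set (Fin I.m × ℕ), I.FlushSet S →
    (I.n : ℝ) - I.k - I.f τ S ≤ I.lhs φ S τ

/-- Cost of an LP solution: `∑_{B, 1 ≤ t ≤ T} c_B · φ_B^t`. -/
noncomputable def costφ (φ : Fin I.m × ℕ → ℝ) : ℝ :=
  ∑ B : Fin I.m, ∑ t ∈ Finset.Icc 1 I.T, I.c B * φ (B, t)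

end BlockInstance

namespace BlockInstance

variable (I : BlockInstance)

/-- The finset of missing pages. -/
noncomputable def MS (τ : ℕ) (S : Set (Fin I.m × ℕ)) : Finset (Fin I.n) :=
  Finset.univ.filter fun p => I.Missing S τ p

lemma f_eq (τ : ℕ) (S : Set (Fin I.m × ℕ)) :
    I.f τ S = min (I.n - I.k) (I.MS τ S).card := rfl

lemma MS_insert (τ : ℕ) (S : Set (Fin I.m × ℕ)) (x : Fin I.m × ℕ) :
    I.MS τ (insert x S) = I.MS τ S ∪ I.MS τ {x} := by
  ext p
  simp only [MS, Finset.mem_filter, Finset.mem_union, Finset.mem_univ, true_and]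
  simp only [Missing, Set.mem_insert_iff, Set.mem_singleton_iff]
  constructor
  · rintro ⟨t, ht, (h | h), hr⟩
    · exact Or.inr ⟨t, ht, h, hr⟩
    · exact Or.inl ⟨t, ht, h, hr⟩
  · rintro (⟨t, ht, h, hr⟩ | ⟨t, ht, h, hr⟩)
    · exact ⟨t, ht, Or.inr h, hr⟩
    · exact ⟨t, ht, Or.inl h, hr⟩

lemma card_submod (τ : ℕ) (S : Set (Fin I.m × ℕ)) (x y : Fin I.m × ℕ) :
    (I.MS τ (insert y (insert x S))).card + (I.MS τ S).card ≤
      (I.MS τ (insert y S)).card + (I.MS τ (insert x S)).card := by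
  rw [I.MS_insert τ (insert x S) y, I.MS_insert τ S x, I.MS_insert τ S y]
  set A := I.MS τ S
  set X := I.MS τ {x}
  set Y := I.MS τ {y}
  have h1 : (A ∪ X) ∪ Y ⊆ (A ∪ Y) ∪ (A ∪ X) := by
    intro p hp; simp only [Finset.mem_union] at hp ⊢; tauto
  have h2 : A ⊆ (A ∪ Y) ∩ (A ∪ X) := by
    intro p hp; simp only [Finset.mem_inter, Finset.mem_union]; tauto
  calc ((A ∪ X) ∪ Y).card + A.card
      ≤ ((A ∪ Y) ∪ (A ∪ X)).card + ((A ∪ Y) ∩ (A ∪ X)).card :=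
        Nat.add_le_add (Finset.card_le_card h1) (Finset.card_le_card h2)
    _ = (A ∪ Y).card + (A ∪ X).card := Finset.card_union_add_card_inter _ _

lemma f_mono (τ : ℕ) (S : Set (Fin I.m × ℕ)) (x : Fin I.m × ℕ) :
    I.f τ S ≤ I.f τ (insert x S) := by
  rw [f_eq, f_eq, MS_insert]
  exact min_le_min le_rfl (Finset.card_le_card Finset.subset_union_left)

lemma f_submod (τ : ℕ) (S : Set (Fin I.m × ℕ)) (x y : Fin I.m × ℕ) :
    I.f τ (insert y (insert x S)) + I.f τ S ≤
      I.f τ (insert y S) + I.f τ (insert x S) := by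
  have hg := I.card_submod τ S x y
  have h1 : (I.MS τ S).card ≤ (I.MS τ (insert x S)).card := by
    rw [MS_insert]; exact Finset.card_le_card Finset.subset_union_left
  have h2 : (I.MS τ S).card ≤ (I.MS τ (insert y S)).card := by
    rw [MS_insert]; exact Finset.card_le_card Finset.subset_union_left
  have h3 : (I.MS τ (insert x S)).card ≤ (I.MS τ (insert y (insert x S))).card := by
    rw [I.MS_insert τ (insert x S) y]
    exact Finset.card_le_card Finset.subset_union_left
  simp only [f_eq]
  omega

lemma lhs_eq_sum (φ : Fin I.m × ℕ → ℝ) (S : Set (Fin I.m × ℕ)) (τ : ℕ) :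
    I.lhs φ S τ = ∑ y ∈ Finset.univ ×ˢ Finset.range (I.T + 1),
      ((I.f τ (insert y S) : ℝ) - (I.f τ S : ℝ)) * φ y := by
  rw [Finset.sum_product]
  rfl

lemma step (φ : Fin I.m × ℕ → ℝ)
    (hφ : ∀ (B : Fin I.m) (t : ℕ), t ≤ I.T → φ (B, t) ∈ Set.Icc (0 : ℝ) 1)
    (τ : ℕ) (S : Set (Fin I.m × ℕ)) (x : Fin I.m × ℕ) (hxT : x.2 ≤ I.T)
    (hx1 : φ x = 1)
    (h : (I.n : ℝ) - I.k - I.f τ (insert x S) ≤ I.lhs φ (insert x S) τ) :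
    (I.n : ℝ) - I.k - I.f τ S ≤ I.lhs φ S τ := by
  have hxA : x ∈ Finset.univ ×ˢ Finset.range (I.T + 1) := by
    simp [Finset.mem_product, Nat.lt_succ_iff, hxT]
  rw [lhs_eq_sum] at h ⊢
  rw [← Finset.add_sum_erase _ _ hxA] at h ⊢
  have hx0 : ((I.f τ (insert x (insert x S)) : ℝ) - (I.f τ (insert x S) : ℝ)) * φ x = 0 := by
    rw [Set.insert_idem]; ring
  rw [hx0, zero_add] at h
  have hfx : ((I.f τ (insert x S) : ℝ) - (I.f τ S : ℝ)) * φ x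
      = (I.f τ (insert x S) : ℝ) - (I.f τ S : ℝ) := by rw [hx1, mul_one]
  have hsum : ∑ y ∈ (Finset.univ ×ˢ Finset.range (I.T + 1)).erase x,
        ((I.f τ (insert y (insert x S)) : ℝ) - (I.f τ (insert x S) : ℝ)) * φ y
      ≤ ∑ y ∈ (Finset.univ ×ˢ Finset.range (I.T + 1)).erase x,
        ((I.f τ (insert y S) : ℝ) - (I.f τ S : ℝ)) * φ y := by
    apply Finset.sum_le_sum
    intro y hy
    have hyA := Finset.mem_of_mem_erase hy
    have hyT : y.2 ≤ I.T := by
      have := (Finset.mem_product.mp hyA).2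
      simpa [Nat.lt_succ_iff] using this
    have hφy : φ y ∈ Set.Icc (0 : ℝ) 1 := hφ y.1 y.2 hyT
    apply mul_le_mul_of_nonneg_right _ hφy.1
    have hn := I.f_submod τ S x y
    have hn' : ((I.f τ (insert y (insert x S)) + I.f τ S : ℕ) : ℝ)
        ≤ ((I.f τ (insert y S) + I.f τ (insert x S) : ℕ) : ℝ) := Nat.cast_le.mpr hn
    push_cast at hn'
    linarith
  linarith [hfx, h, hsum]

end BlockInstance

/-- if every maximal-integral constraint of LP (P) holds for `φ`
(with coordinates in `[0,1]`), then every constraint holds, i.e. `φ` is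
feasible for (P). -/
theorem feasible_of_maximal_integral (I : BlockInstance) (φ : Fin I.m × ℕ → ℝ)
    (hφ : ∀ (B : Fin I.m) (t : ℕ), t ≤ I.T → φ (B, t) ∈ Set.Icc (0 : ℝ) 1)
    (hmax : ∀ τ, 1 ≤ τ → τ ≤ I.T → ∀ S : Set (Fin I.m × ℕ), I.FlushSet S →
      (∀ (B : Fin I.m) (t : ℕ), t ≤ I.T → φ (B, t) = 1 → (B, t) ∈ S) →
      (I.n : ℝ) - I.k - I.f τ S ≤ I.lhs φ S τ) :
    ∀ τ, 1 ≤ τ → τ ≤ I.T → ∀ S : Set (Fin I.m × ℕ), I.FlushSet S →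
      (I.n : ℝ) - I.k - I.f τ S ≤ I.lhs φ S τ := by
  intro τ hτ1 hτT
  suffices H : ∀ N (S : Set (Fin I.m × ℕ)), I.FlushSet S →
      ((Finset.univ ×ˢ Finset.range (I.T + 1)).filter fun y => φ y = 1 ∧ y ∉ S).card ≤ N →
      (I.n : ℝ) - I.k - I.f τ S ≤ I.lhs φ S τ by
    intro S hS
    exact H _ S hS le_rfl
  intro N
  induction N with
  | zero =>
    intro S hS hcard
    apply hmax τ hτ1 hτT S hS
    intro B t ht h1
    by_contra hns
    have hmem : ((B, t) : Fin I.m × ℕ) ∈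
        (Finset.univ ×ˢ Finset.range (I.T + 1)).filter fun y => φ y = 1 ∧ y ∉ S := by
      simp [Finset.mem_filter, Finset.mem_product, Nat.lt_succ_iff, ht, h1, hns]
    have := Finset.card_pos.mpr ⟨_, hmem⟩
    omega
  | succ N ih =>
    intro S hS hcard
    set D := (Finset.univ ×ˢ Finset.range (I.T + 1)).filter
      (fun y => φ y = 1 ∧ y ∉ S) with hD
    rcases D.eq_empty_or_nonempty with hDe | ⟨x, hx⟩
    · exact ih S hS (by rw [← hD, hDe]; simp)
    · rw [hD, Finset.mem_filter] at hx
      obtain ⟨hxA, hx1, hxS⟩ := hx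
      have hxT : x.2 ≤ I.T := by
        have := (Finset.mem_product.mp hxA).2
        simpa [Nat.lt_succ_iff] using this
      have hS' : I.FlushSet (insert x S) := by
        intro y hy
        rcases Set.mem_insert_iff.mp hy with rfl | hy
        · exact hxT
        · exact hS y hy
      have hfilter : (Finset.univ ×ˢ Finset.range (I.T + 1)).filter
          (fun y => φ y = 1 ∧ y ∉ insert x S) = D.erase x := by
        rw [hD]
        ext y
        simp only [Finset.mem_filter, Finset.mem_erase, Set.mem_insert_iff]
        push_neg
        tauto
      have hcard' : ((Finset.univ ×ˢ Finset.range (I.T + 1)).filter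
          (fun y => φ y = 1 ∧ y ∉ insert x S)).card ≤ N := by
        rw [hfilter, Finset.card_erase_of_mem]
        · omega
        · rw [hD, Finset.mem_filter]; exact ⟨hxA, hx1, hxS⟩
      refine I.step φ hφ τ S x hxT hx1 (ih (insert x S) hS' ?_)
      convert hcard' using 3
end

section
/- Fix a finite page set P of n pages, a partition 𝓑 of P into blocks each of size at most β, block costs c_B > 0, and a cache size k with β ≤ k ≤ n. There exists a deterministic online eviction algorithm A such that for every T and every request sequence σ = (p_1,…,p_T) over P, the set of flushes A(σ) is feasible for the resulting block-aware caching instance and its eviction cost satisfies c(A(σ)) ≤ k · OPT(σ), where OPT(σ) is the minimum eviction cost of a feasible set of flushes for that instance. -/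
open scoped Classical

/-- The static data of a block-aware caching system: `n` pages `Fin n`,
`m` blocks `Fin m`, blocks of size at most `β`, block costs `c`, and a cache
of size `k` with `1 ≤ β ≤ k ≤ n`.  A request sequence is a list of pages. -/
structure BlockSystem where
  n : ℕ
  m : ℕ
  β : ℕ
  k : ℕ
  blk : Fin n → Fin m
  blk_surj : Function.Surjective blk
  block_size : ∀ b : Fin m, (Finset.univ.filter fun p => blk p = b).card ≤ β
  c : Fin m → ℝ
  c_pos : ∀ b, 0 < c b
  one_le_beta : 1 ≤ β
  beta_le_k : β ≤ k
  k_le_n : k ≤ n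

namespace BlockSystem

variable (G : BlockSystem)

/-- For the request sequence `σ` (the request at time `t ∈ {1,…,|σ|}` is
`σ[t-1]?`), page `p` is missing at time `τ` according to the flush set
`S`: there is a flush `(B(p), t)` with `r(p,τ) < t ≤ τ`. -/
def Missing (σ : List (Fin G.n)) (S : Set (Fin G.m × ℕ)) (τ : ℕ)
    (p : Fin G.n) : Prop :=
  ∃ t, t ≤ τ ∧ (G.blk p, t) ∈ S ∧
    ∀ u, t ≤ u → u ≤ τ → 1 ≤ u → σ[u - 1]? ≠ some p

/-- `f_τ(S) = min (n - k) #{missing pages at τ}` for the request sequence `σ`. -/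
noncomputable def f (σ : List (Fin G.n)) (τ : ℕ) (S : Set (Fin G.m × ℕ)) : ℕ :=
  min (G.n - G.k) (Finset.univ.filter fun p => G.Missing σ S τ p).card

/-- A set of flushes is feasible for the request sequence `σ` if
`f_τ(S) ≥ n − k` for every time `τ ∈ {1,…,|σ|}`. -/
def Feasible (σ : List (Fin G.n)) (S : Set (Fin G.m × ℕ)) : Prop :=
  ∀ τ, 1 ≤ τ → τ ≤ σ.length → G.n - G.k ≤ G.f σ τ S

/-- The eviction cost of a set of flushes: `∑_{(B,t) ∈ S, t ≥ 1} c_B`. -/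
noncomputable def costS (S : Finset (Fin G.m × ℕ)) : ℝ :=
  ∑ x ∈ S.filter (fun x => 1 ≤ x.2), G.c x.1

end BlockSystem

namespace BlockSystem

variable (G : BlockSystem)

/- ============ algorithm ============ -/

structure St (G : BlockSystem) where
  A : Finset (Fin G.n)
  H : Fin G.m → ℝ
  F : Finset (Fin G.m × ℕ)

noncomputable def init : St G :=
  ⟨∅, G.c, Finset.univ.image fun B => (B, 0)⟩

lemma one_le_k : 1 ≤ G.k := le_trans G.one_le_beta G.beta_le_k

noncomputable def delta (s : St G) (hA : (s.A.image G.blk).Nonempty) : ℝ :=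
  (s.A.image G.blk).inf' hA s.H

noncomputable def Zset (s : St G) (hA : (s.A.image G.blk).Nonempty) : Finset (Fin G.m) :=
  (s.A.image G.blk).filter fun B => s.H B ≤ G.delta s hA

noncomputable def roundStep (τ : ℕ) (s : St G) (p : Fin G.n)
    (hA : (s.A.image G.blk).Nonempty) : St G :=
  ⟨insert p (s.A.filter fun q => G.blk q ∉ G.Zset s hA),
   fun B => if B ∈ G.Zset s hA then G.c B
            else if B ∈ s.A.image G.blk then s.H B - G.delta s hA else s.H B,
   s.F ∪ (G.Zset s hA).image fun B => (B, τ)⟩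

lemma nonempty_blocks_of_full {s : St G} {p : Fin G.n}
    (h : ¬(p ∈ s.A ∨ s.A.card < G.k)) : (s.A.image G.blk).Nonempty := by
  have hk : G.k ≤ s.A.card := le_of_not_gt fun hh => h (Or.inr hh)
  exact (Finset.card_pos.mp
    (lt_of_lt_of_le (lt_of_lt_of_le Nat.zero_lt_one G.one_le_k) hk)).image _

noncomputable def step (τ : ℕ) (s : St G) (p : Fin G.n) : St G :=
  if h : p ∈ s.A ∨ s.A.card < G.k then ⟨insert p s.A, s.H, s.F⟩
  else G.roundStep τ s p (G.nonempty_blocks_of_full h)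

lemma delta_nonneg {s : St G} (hA : (s.A.image G.blk).Nonempty)
    (hpos : ∀ B, 0 ≤ s.H B) : 0 ≤ G.delta s hA :=
  Finset.le_inf' hA s.H fun B _ => hpos B

lemma delta_le {s : St G} (hA : (s.A.image G.blk).Nonempty) {B : Fin G.m}
    (hB : B ∈ s.A.image G.blk) : G.delta s hA ≤ s.H B :=
  Finset.inf'_le s.H hB

lemma Zset_subset {s : St G} (hA : (s.A.image G.blk).Nonempty) :
    G.Zset s hA ⊆ s.A.image G.blk := Finset.filter_subset _ _

lemma H_eq_of_mem_Zset {s : St G} (hA : (s.A.image G.blk).Nonempty) {B : Fin G.m}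
    (hB : B ∈ G.Zset s hA) : s.H B = G.delta s hA := by
  have h1 := (Finset.mem_filter.mp hB).2
  exact le_antisymm h1 (G.delta_le hA (Finset.mem_filter.mp hB).1)

lemma Zset_nonempty {s : St G} (hA : (s.A.image G.blk).Nonempty) :
    ∃ B, B ∈ G.Zset s hA := by
  obtain ⟨B, hB, hEq⟩ := Finset.exists_mem_eq_inf' hA s.H
  exact ⟨B, Finset.mem_filter.mpr ⟨hB, le_of_eq hEq.symm⟩⟩

noncomputable def runAux : ℕ → St G → List (Fin G.n) → St G
  | _, s, [] => s
  | τ, s, p :: l => runAux (τ + 1) (G.step τ s p) l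

noncomputable def run (σ : List (Fin G.n)) : St G := G.runAux 1 (G.init) σ

lemma runAux_append (t : ℕ) (s : St G) (l₁ l₂ : List (Fin G.n)) :
    G.runAux t s (l₁ ++ l₂) = G.runAux (t + l₁.length) (G.runAux t s l₁) l₂ := by
  induction l₁ generalizing t s with
  | nil => simp [runAux]
  | cons p l ih =>
      have h : t + (l.length + 1) = (t + 1) + l.length := by omega
      simp only [List.cons_append, runAux, List.length_cons, h]
      exact ih _ _

lemma run_concat (σ : List (Fin G.n)) (p : Fin G.n) :
    G.run (σ ++ [p]) = G.step (σ.length + 1) (G.run σ) p := by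
  simp [run, runAux_append, runAux, Nat.add_comm]

/- step F facts -/
lemma step_F_subset (τ : ℕ) (s : St G) (p : Fin G.n) : s.F ⊆ (G.step τ s p).F := by
  unfold step
  split
  · exact fun x hx => hx
  · exact fun x hx => Finset.mem_union_left _ hx

lemma step_F_new (τ : ℕ) (s : St G) (p : Fin G.n) :
    ∀ x ∈ (G.step τ s p).F, x ∈ s.F ∨ x.2 = τ := by
  unfold step
  split
  · exact fun x hx => Or.inl hx
  · intro x hx
    rcases Finset.mem_union.mp hx with h | h
    · exact Or.inl h
    · rcases Finset.mem_image.mp h with ⟨B, _, rfl⟩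
      exact Or.inr rfl

lemma runAux_F_subset (t : ℕ) (s : St G) (l : List (Fin G.n)) :
    s.F ⊆ (G.runAux t s l).F := by
  induction l generalizing t s with
  | nil => exact fun x hx => hx
  | cons p l ih => exact fun x hx => ih _ _ ((G.step_F_subset t s p) hx)

lemma runAux_F_new (t : ℕ) (s : St G) (l : List (Fin G.n)) :
    ∀ x ∈ (G.runAux t s l).F, x ∈ s.F ∨ t ≤ x.2 := by
  induction l generalizing t s with
  | nil => exact fun x hx => Or.inl hx
  | cons p l ih =>
      intro x hx
      rcases ih _ _ x hx with h | h
      · rcases G.step_F_new t s p x h with h' | h'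
        · exact Or.inl h'
        · exact Or.inr (le_of_eq h'.symm)
      · exact Or.inr (le_trans (Nat.le_succ t) h)

end BlockSystem

namespace BlockSystem

variable (G : BlockSystem)

/- ============ presence invariant ============ -/

def Pres (σ : List (Fin G.n)) (F : Finset (Fin G.m × ℕ)) (q : Fin G.n) : Prop :=
  ∃ i, i < σ.length ∧ σ[i]? = some q ∧ (∀ j, i < j → σ[j]? ≠ some q) ∧
    ∀ t, i + 1 < t → (G.blk q, t) ∉ F

structure Inv (σ : List (Fin G.n)) (s : St G) : Prop where
  times : ∀ x ∈ s.F, x.2 ≤ σ.length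
  zero : ∀ B, (B, 0) ∈ s.F
  Hpos : ∀ B, 0 ≤ s.H B
  Hle : ∀ B, s.H B ≤ G.c B
  cardA : s.A.card ≤ G.k
  pres : ∀ q, q ∈ s.A ↔ G.Pres σ s.F q

lemma inv_init : G.Inv [] G.init := by
  constructor
  · intro x hx
    rcases Finset.mem_image.mp hx with ⟨B, _, rfl⟩
    simp
  · intro B
    exact Finset.mem_image.mpr ⟨B, Finset.mem_univ _, rfl⟩
  · exact fun B => le_of_lt (G.c_pos B)
  · exact fun B => le_refl _
  · simp [init]
  · intro q
    constructor
    · intro hq; simp [init] at hq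
    · rintro ⟨i, hi, _⟩
      simp at hi

lemma pres_concat_self {σ : List (Fin G.n)} {F' : Finset (Fin G.m × ℕ)} (p : Fin G.n)
    (htimes' : ∀ x ∈ F', x.2 ≤ σ.length + 1) : G.Pres (σ ++ [p]) F' p := by
  refine ⟨σ.length, by simp, List.getElem?_concat_length, ?_, ?_⟩
  · intro j hj hcon
    have hlen : (σ ++ [p]).length ≤ j := by simp; omega
    rw [List.getElem?_eq_none_iff.mpr hlen] at hcon
    cases hcon
  · intro t ht hmem
    have := htimes' _ hmem
    simp at this
    omega

lemma pres_concat_ne {σ : List (Fin G.n)} {F F' : Finset (Fin G.m × ℕ)}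
    {q p : Fin G.n} (hq : q ≠ p) (hsub : F ⊆ F')
    (htimes : ∀ x ∈ F, x.2 ≤ σ.length)
    (hnew : ∀ x ∈ F', x ∉ F → x.2 = σ.length + 1) :
    G.Pres (σ ++ [p]) F' q ↔ (G.Pres σ F q ∧ (G.blk q, σ.length + 1) ∉ F') := by
  constructor
  · rintro ⟨i, hi, hget, hlast, hfl⟩
    have hilen : i < σ.length := by
      rcases Nat.lt_succ_iff_lt_or_eq.mp (by simpa using hi) with h | rfl
      · exact h
      · rw [List.getElem?_concat_length] at hget
        exact absurd (Option.some.inj hget).symm hq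
    have hgetσ : σ[i]? = some q := by
      rw [List.getElem?_append_left hilen] at hget; exact hget
    refine ⟨⟨i, hilen, hgetσ, ?_, ?_⟩, ?_⟩
    · intro j hj hcon
      have hjlen : j < σ.length := by
        by_contra hge
        push_neg at hge
        rw [List.getElem?_eq_none_iff.mpr hge] at hcon
        cases hcon
      have : (σ ++ [p])[j]? = some q := by
        rw [List.getElem?_append_left hjlen]; exact hcon
      exact hlast j hj this
    · intro t ht hmem
      exact hfl t ht (hsub hmem)
    · exact hfl _ (by omega) 
  · rintro ⟨⟨i, hi, hget, hlast, hfl⟩, hnot⟩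
    refine ⟨i, by simp; omega, by rw [List.getElem?_append_left hi]; exact hget, ?_, ?_⟩
    · intro j hj hcon
      by_cases hjlen : j < σ.length
      · rw [List.getElem?_append_left hjlen] at hcon
        exact hlast j hj hcon
      · by_cases hjeq : j = σ.length
        · subst hjeq
          rw [List.getElem?_concat_length] at hcon
          exact hq (Option.some.inj hcon).symm
        · have : (σ ++ [p]).length ≤ j := by simp; omega
          rw [List.getElem?_eq_none_iff.mpr this] at hcon
          cases hcon
    · intro t ht hmem
      by_cases hF : (G.blk q, t) ∈ F
      · exact hfl t ht hF
      · have := hnew _ hmem hF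
        simp at this
        subst this
        exact hnot hmem

end BlockSystem

namespace BlockSystem

variable (G : BlockSystem)

lemma inv_roundStep {σ : List (Fin G.n)} {s : St G} (hs : G.Inv σ s) (p : Fin G.n)
    (hA : (s.A.image G.blk).Nonempty) :
    G.Inv (σ ++ [p]) (G.roundStep (σ.length + 1) s p hA) := by
  have htimes' : ∀ x ∈ (G.roundStep (σ.length + 1) s p hA).F, x.2 ≤ σ.length + 1 := by
    intro x hx
    rcases Finset.mem_union.mp hx with hx | hx
    · exact le_trans (hs.times x hx) (Nat.le_succ _)
    · rcases Finset.mem_image.mp hx with ⟨B, _, rfl⟩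
      exact le_refl _
  constructor
  · intro x hx
    have := htimes' x hx
    simpa using this
  · intro B
    exact Finset.mem_union_left _ (hs.zero B)
  · intro B
    show (0:ℝ) ≤ if B ∈ G.Zset s hA then G.c B
        else if B ∈ s.A.image G.blk then s.H B - G.delta s hA else s.H B
    split_ifs with h1 h2
    · exact le_of_lt (G.c_pos B)
    · exact sub_nonneg.mpr (G.delta_le hA h2)
    · exact hs.Hpos B
  · intro B
    show (if B ∈ G.Zset s hA then G.c B
        else if B ∈ s.A.image G.blk then s.H B - G.delta s hA else s.H B) ≤ G.c B
    split_ifs with h1 h2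
    · exact le_refl _
    · exact le_trans (sub_le_self _ (G.delta_nonneg hA hs.Hpos)) (hs.Hle B)
    · exact hs.Hle B
  · show (insert p (s.A.filter fun q => G.blk q ∉ G.Zset s hA)).card ≤ G.k
    obtain ⟨B₀, hB₀⟩ := G.Zset_nonempty hA
    obtain ⟨q₀, hq₀A, hq₀⟩ := Finset.mem_image.mp (G.Zset_subset hA hB₀)
    have hq₀notin : q₀ ∉ s.A.filter (fun q => G.blk q ∉ G.Zset s hA) := by
      simp only [Finset.mem_filter, not_and, not_not]
      intro _
      rw [hq₀]; exact hB₀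
    have hss : s.A.filter (fun q => G.blk q ∉ G.Zset s hA) ⊂ s.A :=
      (Finset.ssubset_iff_of_subset (Finset.filter_subset _ _)).mpr ⟨q₀, hq₀A, hq₀notin⟩
    have h1 : (s.A.filter (fun q => G.blk q ∉ G.Zset s hA)).card < G.k :=
      lt_of_lt_of_le (Finset.card_lt_card hss) hs.cardA
    calc (insert p (s.A.filter fun q => G.blk q ∉ G.Zset s hA)).card
        ≤ (s.A.filter fun q => G.blk q ∉ G.Zset s hA).card + 1 := Finset.card_insert_le _ _
      _ ≤ G.k := h1
  · intro q
    by_cases hq : q = p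
    · subst hq
      constructor
      · intro _
        exact G.pres_concat_self q htimes'
      · intro _
        exact Finset.mem_insert_self _ _
    · show q ∈ insert p (s.A.filter fun q => G.blk q ∉ G.Zset s hA) ↔
        G.Pres (σ ++ [p]) (s.F ∪ (G.Zset s hA).image fun B => (B, σ.length + 1)) q
      have hnew : ∀ x ∈ s.F ∪ (G.Zset s hA).image (fun B => (B, σ.length + 1)),
          x ∉ s.F → x.2 = σ.length + 1 := by
        intro x hx hnx
        rcases Finset.mem_union.mp hx with hx | hx
        · exact absurd hx hnx
        · rcases Finset.mem_image.mp hx with ⟨B, _, rfl⟩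
          rfl
      rw [G.pres_concat_ne hq (Finset.subset_union_left) hs.times hnew]
      constructor
      · intro hmemins
        rcases Finset.mem_insert.mp hmemins with rfl | hqmem
        · exact absurd rfl hq
        · rcases Finset.mem_filter.mp hqmem with ⟨hqA, hZ⟩
          refine ⟨(hs.pres q).mp hqA, ?_⟩
          intro hmem
          rcases Finset.mem_union.mp hmem with hmem | hmem
          · have := hs.times _ hmem
            simp at this
          · rcases Finset.mem_image.mp hmem with ⟨B, hB, hEq⟩
            have : B = G.blk q := (Prod.mk.injEq _ _ _ _).mp hEq |>.1
            exact hZ (this ▸ hB)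
      · rintro ⟨hPres, hnot⟩
        refine Finset.mem_insert_of_mem (Finset.mem_filter.mpr ⟨(hs.pres q).mpr hPres, ?_⟩)
        intro hZ
        exact hnot (Finset.mem_union_right _ (Finset.mem_image.mpr ⟨_, hZ, rfl⟩))

lemma inv_step {σ : List (Fin G.n)} {s : St G} (hs : G.Inv σ s) (p : Fin G.n) :
    G.Inv (σ ++ [p]) (G.step (σ.length + 1) s p) := by
  rw [step]
  split_ifs with h
  · have htimes' : ∀ x ∈ s.F, x.2 ≤ (σ ++ [p]).length := by
      intro x hx
      simp only [List.length_append, List.length_singleton]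
      exact le_trans (hs.times x hx) (Nat.le_succ _)
    refine ⟨htimes', hs.zero, hs.Hpos, hs.Hle, ?_, ?_⟩
    · rcases h with h | h
      · rw [Finset.insert_eq_self.mpr h]; exact hs.cardA
      · calc (insert p s.A).card ≤ s.A.card + 1 := Finset.card_insert_le _ _
          _ ≤ G.k := h
    · intro q
      by_cases hq : q = p
      · subst hq
        constructor
        · intro _
          exact G.pres_concat_self q (by simpa using htimes')
        · intro _
          exact Finset.mem_insert_self _ _
      · have hnotin : (G.blk q, σ.length + 1) ∉ s.F := by
          intro hmem
          have := hs.times _ hmem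
          simp at this
        rw [show ((⟨insert p s.A, s.H, s.F⟩ : St G)).F = s.F from rfl]
        rw [G.pres_concat_ne hq (subset_refl _) hs.times (fun x hx hnx => absurd hx hnx)]
        simp only [Finset.mem_insert]
        constructor
        · rintro (rfl | hqA)
          · exact absurd rfl hq
          · exact ⟨(hs.pres q).mp hqA, hnotin⟩
        · rintro ⟨hPres, _⟩
          exact Or.inr ((hs.pres q).mpr hPres)
  · exact G.inv_roundStep hs p _

lemma inv_run (σ : List (Fin G.n)) : G.Inv σ (G.run σ) := by
  induction σ using List.reverseRecOn with
  | nil => exact G.inv_init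
  | append_singleton σ p ih =>
      rw [run_concat]
      exact G.inv_step ih p

end BlockSystem

namespace BlockSystem

variable (G : BlockSystem)

lemma run_prefix {σ' σ : List (Fin G.n)} (hpre : σ' <+: σ) :
    (G.run σ').F ⊆ (G.run σ).F ∧
      ∀ x ∈ (G.run σ).F, x ∉ (G.run σ').F → σ'.length + 1 ≤ x.2 := by
  obtain ⟨rest, rfl⟩ := hpre
  have hrun : G.run (σ' ++ rest) = G.runAux (1 + σ'.length) (G.run σ') rest := by
    rw [run, runAux_append]; rfl
  constructor
  · rw [hrun]; exact G.runAux_F_subset _ _ _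
  · intro x hx hnx
    rw [hrun] at hx
    rcases G.runAux_F_new _ _ _ x hx with h | h
    · exact absurd h hnx
    · omega

lemma prefix_get? {σ' σ : List (Fin G.n)} (hpre : σ' <+: σ) {i : ℕ}
    (hi : i < σ'.length) : σ[i]? = σ'[i]? := by
  obtain ⟨rest, rfl⟩ := hpre
  exact List.getElem?_append_left hi

lemma not_presA_missing {σ : List (Fin G.n)} {τ : ℕ} (h1 : 1 ≤ τ) (h2 : τ ≤ σ.length)
    {q : Fin G.n} (hq : q ∉ (G.run (σ.take τ)).A) :
    G.Missing σ ↑((G.run σ).F) τ q := by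
  set ρ := σ.take τ with hρ
  have hρpre : ρ <+: σ := List.take_prefix τ σ
  have hρlen : ρ.length = τ := by
    rw [hρ, List.length_take]; omega
  have hsub : (G.run ρ).F ⊆ (G.run σ).F := (G.run_prefix hρpre).1
  have hinvρ := G.inv_run ρ
  by_cases hreq : ∃ i, i < τ ∧ σ[i]? = some q
  · -- q was requested; use maximal request index
    classical
    set I := (Finset.range τ).filter (fun i => σ[i]? = some q) with hI
    have hIne : I.Nonempty := by
      obtain ⟨i, hi, hgi⟩ := hreq
      exact ⟨i, Finset.mem_filter.mpr ⟨Finset.mem_range.mpr hi, hgi⟩⟩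
    set i := I.max' hIne with hidef
    have hiI : i ∈ I := Finset.max'_mem _ _
    have hiτ : i < τ := Finset.mem_range.mp (Finset.mem_filter.mp hiI).1
    have higet : σ[i]? = some q := (Finset.mem_filter.mp hiI).2
    have hmax : ∀ j, i < j → j < τ → σ[j]? ≠ some q := by
      intro j hij hjτ hcon
      have : j ∈ I := Finset.mem_filter.mpr ⟨Finset.mem_range.mpr hjτ, hcon⟩
      have := Finset.le_max' I j this
      omega
    have hnpres : ¬ G.Pres ρ (G.run ρ).F q := fun hP => hq ((hinvρ.pres q).mpr hP)
    have hflush : ∃ t, i + 1 < t ∧ (G.blk q, t) ∈ (G.run ρ).F := by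
      by_contra hcon
      push_neg at hcon
      apply hnpres
      refine ⟨i, by omega, ?_, ?_, fun t ht hmem => hcon t ht hmem⟩
      · rw [← G.prefix_get? hρpre (by omega)]; exact higet
      · intro j hj hconj
        by_cases hjτ : j < τ
        · exact hmax j hj hjτ (by rw [← G.prefix_get? hρpre (by omega)] at hconj; exact hconj)
        · rw [List.getElem?_eq_none_iff.mpr (by omega)] at hconj
          cases hconj
    obtain ⟨t, hti, htmem⟩ := hflush
    have htτ : t ≤ τ := by
      have := hinvρ.times _ htmem
      omega
    refine ⟨t, htτ, hsub htmem, ?_⟩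
    intro u hu1 hu2 hu3 hcon
    exact hmax (u - 1) (by omega) (by omega) hcon
  · -- q never requested up to τ; use the time-0 flush
    push_neg at hreq
    refine ⟨0, Nat.zero_le _, (G.inv_run σ).zero _, ?_⟩
    intro u _ hu2 hu3 hcon
    exact hreq (u - 1) (by omega) hcon

lemma feasible_run (σ : List (Fin G.n)) : G.Feasible σ ↑((G.run σ).F) := by
  intro τ h1 h2
  classical
  have hsubset : Finset.univ \ (G.run (σ.take τ)).A ⊆
      Finset.univ.filter (fun q => G.Missing σ ↑((G.run σ).F) τ q) := by
    intro q hqmem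
    rcases Finset.mem_sdiff.mp hqmem with ⟨_, hq⟩
    exact Finset.mem_filter.mpr ⟨Finset.mem_univ _, G.not_presA_missing h1 h2 hq⟩
  have hcard1 : (Finset.univ \ (G.run (σ.take τ)).A).card = G.n - (G.run (σ.take τ)).A.card := by
    rw [Finset.card_sdiff_of_subset (Finset.subset_univ _)]
    simp
  have hcard2 : G.n - G.k ≤ (Finset.univ \ (G.run (σ.take τ)).A).card := by
    rw [hcard1]
    exact Nat.sub_le_sub_left (G.inv_run (σ.take τ)).cardA _
  refine le_min le_rfl ?_
  exact le_trans hcard2 (Finset.card_le_card hsubset)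

end BlockSystem

namespace BlockSystem

variable (G : BlockSystem)

def Act (ρ : List (Fin G.n)) (s : St G) (x : Fin G.m × ℕ) : Prop :=
  ∃ q, G.blk q = x.1 ∧ q ∈ s.A ∧ ∀ j, x.2 ≤ j + 1 → ρ[j]? ≠ some q

noncomputable def Gam (H : Fin G.m → ℝ) : ℝ := ∑ B, (G.c B - H B)

lemma costS_init : G.costS (G.init).F = 0 := by
  rw [costS]
  convert Finset.sum_empty
  rw [Finset.filter_eq_empty_iff]
  intro x hx
  rcases Finset.mem_image.mp hx with ⟨B, _, rfl⟩
  simp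

lemma charge (σ : List (Fin G.n)) (S : Finset (Fin G.m × ℕ))
    (hT : ∀ x ∈ S, x.2 ≤ σ.length) (hFe : G.Feasible σ ↑S) :
    ∀ ρ, ρ <+: σ → ∃ χ : Fin G.m × ℕ → ℝ,
      (∀ x, 0 ≤ χ x) ∧
      (∀ x ∈ S.filter (fun x => 1 ≤ x.2), ρ.length < x.2 → χ x = 0) ∧
      (∀ x ∈ S.filter (fun x => 1 ≤ x.2), χ x ≤ G.c x.1) ∧
      (∀ x ∈ S.filter (fun x => 1 ≤ x.2),
        G.Act ρ (G.run ρ) x → χ x + (G.run ρ).H x.1 ≤ G.c x.1) ∧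
      G.costS (G.run ρ).F + G.Gam (G.run ρ).H ≤
        G.k * ∑ x ∈ S.filter (fun x => 1 ≤ x.2), χ x := by
  intro ρ
  induction ρ using List.reverseRecOn with
  | nil =>
      intro _
      refine ⟨fun _ => 0, fun _ => le_refl _, fun _ _ _ => rfl, ?_, ?_, ?_⟩
      · exact fun x _ => le_of_lt (G.c_pos x.1)
      · intro x _ _
        have : (G.run []).H = G.c := rfl
        rw [this]
        simp
      · have h1 : (G.run []).F = (G.init).F := rfl
        have h2 : (G.run []).H = G.c := rfl
        rw [h1, h2, G.costS_init, Gam]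
        simp
  | append_singleton ρ p ih =>
      intro hpre'
      have hpre : ρ <+: σ := (List.prefix_append ρ [p]).trans hpre'
      obtain ⟨χ, hχ0, hχz, hχc, hχact, hχcost⟩ := ih hpre
      set s := G.run ρ with hsdef
      set τ := ρ.length + 1 with hτdef
      have hτσ : τ ≤ σ.length := by
        have := hpre'.length_le
        simp at this; omega
      have hrc : G.run (ρ ++ [p]) = G.step τ s p := G.run_concat ρ p
      have hgetp : σ[ρ.length]? = some p := by
        rw [G.prefix_get? hpre' (by simp)]
        exact List.getElem?_concat_length
      by_cases h : p ∈ s.A ∨ s.A.card < G.k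
      · -- lazy step: no flush, nothing changes except A
        have hs'eq : G.run (ρ ++ [p]) = ⟨insert p s.A, s.H, s.F⟩ := by
          rw [hrc, step, dif_pos h]
        have hs'H : (G.run (ρ ++ [p])).H = s.H := by rw [hs'eq]
        have hs'F : (G.run (ρ ++ [p])).F = s.F := by rw [hs'eq]
        have hs'A : (G.run (ρ ++ [p])).A = insert p s.A := by rw [hs'eq]
        refine ⟨χ, hχ0, ?_, hχc, ?_, ?_⟩
        · intro x hx hlen
          exact hχz x hx (by simp at hlen; omega)
        · intro x hx hact
          rw [hs'H]
          by_cases hx2 : ρ.length + 1 < x.2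
          · rw [hχz x hx (by omega)]
            have := (G.inv_run ρ).Hle x.1
            simpa using this
          · obtain ⟨q, hbq, hqA, hcond⟩ := hact
            rw [hs'A] at hqA
            have hqp : q ≠ p := by
              intro rfl'
              subst rfl'
              have := hcond ρ.length (by omega)
              rw [List.getElem?_concat_length] at this
              exact this rfl
            have hqA' : q ∈ s.A := by
              rcases Finset.mem_insert.mp hqA with rfl | h'
              · exact absurd rfl hqp
              · exact h'
            refine hχact x hx ⟨q, hbq, hqA', ?_⟩
            intro j hj hcon
            by_cases hjlen : j < ρ.length
            · rw [← G.prefix_get? (List.prefix_append ρ [p]) hjlen] at hcon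
              exact hcond j hj hcon
            · rw [List.getElem?_eq_none_iff.mpr (by omega)] at hcon
              cases hcon
        · rw [hs'H, hs'F]
          exact hχcost
      · -- round step
        have hA : (s.A.image G.blk).Nonempty := G.nonempty_blocks_of_full h
        have hcard : s.A.card = G.k :=
          le_antisymm (G.inv_run ρ).cardA (le_of_not_gt fun hh => h (Or.inr hh))
        have hpA : p ∉ s.A := fun hh => h (Or.inl hh)
        set Bl := s.A.image G.blk with hBldef
        set δ := G.delta s hA with hδdef
        set Z := G.Zset s hA with hZdef
        have hs'eq : G.run (ρ ++ [p]) = G.roundStep τ s p hA := by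
          rw [hrc, step, dif_neg h]
        have hs'A : (G.run (ρ ++ [p])).A = insert p (s.A.filter fun q => G.blk q ∉ Z) := by
          rw [hs'eq]; rfl
        have hs'H : (G.run (ρ ++ [p])).H =
            fun B => if B ∈ Z then G.c B else if B ∈ Bl then s.H B - δ else s.H B := by
          rw [hs'eq]; rfl
        have hs'F : (G.run (ρ ++ [p])).F = s.F ∪ Z.image (fun B => (B, τ)) := by
          rw [hs'eq]; rfl
        have hδ0 : 0 ≤ δ := G.delta_nonneg hA (G.inv_run ρ).Hpos
        -- find the page q of the cache (plus p) that OPT misses at time τ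
        have hM : G.n - G.k ≤ (Finset.univ.filter (fun q => G.Missing σ ↑S τ q)).card := by
          have := hFe τ (by omega) hτσ
          exact le_trans this (min_le_right _ _)
        have hsplit : (Finset.univ.filter (fun q => G.Missing σ ↑S τ q)).card +
            (Finset.univ.filter (fun q => ¬ G.Missing σ ↑S τ q)).card = G.n := by
          rw [Finset.card_filter_add_card_filter_not]
          simp
        have hfullcard : (insert p s.A).card = G.k + 1 := by
          rw [Finset.card_insert_of_notMem hpA, hcard]
        have hexq : ∃ q ∈ insert p s.A, G.Missing σ ↑S τ q := by
          by_contra hcon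
          push_neg at hcon
          have hsubset : insert p s.A ⊆
              Finset.univ.filter (fun q => ¬ G.Missing σ ↑S τ q) := by
            intro q hq
            exact Finset.mem_filter.mpr ⟨Finset.mem_univ _, hcon q hq⟩
          have hle := Finset.card_le_card hsubset
          rw [hfullcard] at hle
          have hkn := G.k_le_n
          omega
        obtain ⟨q, hqins, t0, ht0τ, ht0S, ht0no⟩ := hexq
        have hqp : q ≠ p := by
          intro hqp'
          have hgp : σ[τ - 1]? = some q := by
            rw [hτdef, hqp']
            simpa using hgetp
          exact ht0no τ ht0τ (le_refl _) (by omega) hgp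
        have hqA : q ∈ s.A := by
          rcases Finset.mem_insert.mp hqins with rfl | h'
          · exact absurd rfl hqp
          · exact h'
        obtain ⟨i, hiρ, higet, hilast, _⟩ := ((G.inv_run ρ).pres q).mp hqA
        have hσi : σ[i]? = some q := by
          rw [G.prefix_get? hpre hiρ]; exact higet
        have ht0i : i + 1 < t0 := by
          by_contra hcon
          push_neg at hcon
          exact ht0no (i + 1) hcon (by omega) (by omega) (by simpa using hσi)
        have ht0ge1 : 1 ≤ t0 := by omega
        have hchS : (G.blk q, t0) ∈ S.filter (fun x => 1 ≤ x.2) :=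
          Finset.mem_filter.mpr ⟨ht0S, ht0ge1⟩
        have hActold : G.Act ρ s (G.blk q, t0) := by
          refine ⟨q, rfl, hqA, ?_⟩
          intro j hj hcon
          by_cases hjlen : j < ρ.length
          · have : σ[j]? = some q := by rw [G.prefix_get? hpre hjlen]; exact hcon
            exact ht0no (j + 1) hj (by omega) (by omega) (by simpa using this)
          · rw [List.getElem?_eq_none_iff.mpr (by omega)] at hcon
            cases hcon
        have hkey : χ (G.blk q, t0) + s.H (G.blk q) ≤ G.c (G.blk q) :=
          hχact _ hchS hActold
        have hblkBl : G.blk q ∈ Bl := Finset.mem_image_of_mem _ hqA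
        have hδle : δ ≤ s.H (G.blk q) := G.delta_le hA hblkBl
        -- new charge function
        set χ' : Fin G.m × ℕ → ℝ :=
          fun x => χ x + (if x = (G.blk q, t0) then δ else 0) with hχ'def
        have hχ'0 : ∀ x, 0 ≤ χ' x := by
          intro x
          rw [hχ'def]
          dsimp only
          split_ifs
          · exact add_nonneg (hχ0 x) hδ0
          · simpa using hχ0 x
        have hχ'z : ∀ x ∈ S.filter (fun x => 1 ≤ x.2),
            (ρ ++ [p]).length < x.2 → χ' x = 0 := by
          intro x hx hlen
          simp only [List.length_append, List.length_singleton] at hlen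
          have hxne : x ≠ (G.blk q, t0) := by
            intro rfl'
            rw [rfl'] at hlen
            simp at hlen
            omega
          rw [hχ'def]
          dsimp only
          rw [if_neg hxne, hχz x hx (by omega)]
          simp
        have hχ'c : ∀ x ∈ S.filter (fun x => 1 ≤ x.2), χ' x ≤ G.c x.1 := by
          intro x hx
          rw [hχ'def]
          dsimp only
          split_ifs with hxe
          · rw [hxe]
            calc χ (G.blk q, t0) + δ ≤ χ (G.blk q, t0) + s.H (G.blk q) :=
                  add_le_add_right hδle _
              _ ≤ G.c (G.blk q) := hkey
          · simpa using hχc x hx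
        refine ⟨χ', hχ'0, hχ'z, hχ'c, ?_, ?_⟩
        · -- Act invariant for the new state
          intro x hx hact
          rw [hs'H]
          dsimp only
          by_cases hx2 : (ρ ++ [p]).length < x.2
          · rw [hχ'z x hx hx2]
            have hHle : (G.run (ρ ++ [p])).H x.1 ≤ G.c x.1 := (G.inv_run (ρ ++ [p])).Hle x.1
            rw [hs'H] at hHle
            simpa using hHle
          · simp only [List.length_append, List.length_singleton] at hx2
            obtain ⟨q', hbq', hq'A, hcond⟩ := hact
            rw [hs'A] at hq'A
            have hq'p : q' ≠ p := by
              intro rfl'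
              subst rfl'
              have := hcond ρ.length (by omega)
              rw [List.getElem?_concat_length] at this
              exact this rfl
            have hq'mem : q' ∈ s.A ∧ G.blk q' ∉ Z := by
              rcases Finset.mem_insert.mp hq'A with rfl | h'
              · exact absurd rfl hq'p
              · exact Finset.mem_filter.mp h'
            have hcondρ : ∀ j, x.2 ≤ j + 1 → ρ[j]? ≠ some q' := by
              intro j hj hcon
              by_cases hjlen : j < ρ.length
              · rw [← G.prefix_get? (List.prefix_append ρ [p]) hjlen] at hcon
                exact hcond j hj hcon
              · rw [List.getElem?_eq_none_iff.mpr (by omega)] at hcon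
                cases hcon
            have hactold : G.Act ρ s x := ⟨q', hbq', hq'mem.1, hcondρ⟩
            have hold := hχact x hx hactold
            have hxZ : x.1 ∉ Z := hbq' ▸ hq'mem.2
            rw [if_neg hxZ]
            rw [hχ'def]
            dsimp only
            split_ifs with hxe hBl' hBl'
            · -- x is the charged pair, x.1 ∈ Bl
              rw [hxe]
              rw [hxe] at hold
              dsimp at hold ⊢
              linarith
            · -- charged pair but x.1 ∉ Bl : impossible since blk q ∈ Bl
              rw [hxe] at hBl'
              exact absurd hblkBl hBl'
            · linarith [hχ0 x]
            · simpa using hold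
        · -- cost inequality
          have hτ1 : 1 ≤ τ := by omega
          -- new flushes are disjoint from old ones
          have hdisj : Disjoint (s.F.filter (fun x => 1 ≤ x.2))
              (Z.image (fun B => (B, τ))) := by
            rw [Finset.disjoint_left]
            intro x hx hx'
            rcases Finset.mem_image.mp hx' with ⟨B, _, rfl⟩
            have := (G.inv_run ρ).times _ (Finset.mem_filter.mp hx).1
            omega
          have hcostF : G.costS (G.run (ρ ++ [p])).F =
              G.costS s.F + ∑ B ∈ Z, G.c B := by
            rw [hs'F, costS, Finset.filter_union]
            have himgfil : (Z.image (fun B => (B, τ))).filter (fun x => 1 ≤ x.2) =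
                Z.image (fun B => (B, τ)) := by
              rw [Finset.filter_eq_self]
              intro x hx
              rcases Finset.mem_image.mp hx with ⟨B, _, rfl⟩
              exact hτ1
            rw [himgfil, Finset.sum_union hdisj, costS]
            congr 1
            rw [Finset.sum_image]
            intro a _ b _ hab
            exact (Prod.mk.injEq _ _ _ _).mp hab |>.1
          -- Γ computation
          have hBlcard : (Bl.card : ℝ) ≤ (G.k : ℝ) := by
            have h1 : Bl.card ≤ s.A.card := Finset.card_image_le
            rw [hcard] at h1
            exact_mod_cast h1
          have hptwise : ∀ B : Fin G.m,
              (G.c B - (if B ∈ Z then G.c B else if B ∈ Bl then s.H B - δ else s.H B))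
                + (if B ∈ Z then G.c B else 0)
              = (G.c B - s.H B) + (if B ∈ Bl then δ else 0) := by
            intro B
            by_cases hBZ : B ∈ Z
            · have hHB : s.H B = δ := G.H_eq_of_mem_Zset hA hBZ
              have hBBl : B ∈ Bl := G.Zset_subset hA hBZ
              rw [if_pos hBZ, if_pos hBZ, if_pos hBBl, hHB]
              ring
            · rw [if_neg hBZ, if_neg hBZ]
              by_cases hBBl : B ∈ Bl
              · rw [if_pos hBBl, if_pos hBBl]
                ring
              · rw [if_neg hBBl, if_neg hBBl]
          have hsumZ : ∑ B : Fin G.m, (if B ∈ Z then G.c B else 0) = ∑ B ∈ Z, G.c B := by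
            rw [← Finset.sum_filter, Finset.filter_univ_mem]
          have hsumBl : ∑ B : Fin G.m, (if B ∈ Bl then δ else 0) = δ * Bl.card := by
            rw [← Finset.sum_filter, Finset.filter_univ_mem, Finset.sum_const,
              nsmul_eq_mul]
            ring
          have hGam : G.Gam (G.run (ρ ++ [p])).H + ∑ B ∈ Z, G.c B =
              G.Gam s.H + δ * Bl.card := by
            rw [hs'H, Gam, Gam, ← hsumZ, ← hsumBl, ← Finset.sum_add_distrib,
              ← Finset.sum_add_distrib]
            exact Finset.sum_congr rfl fun B _ => hptwise B
          have hsumχ' : ∑ x ∈ S.filter (fun x => 1 ≤ x.2), χ' x =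
              (∑ x ∈ S.filter (fun x => 1 ≤ x.2), χ x) + δ := by
            rw [hχ'def]
            dsimp only
            rw [Finset.sum_add_distrib]
            congr 1
            rw [Finset.sum_ite_eq' (S.filter (fun x => 1 ≤ x.2)) (G.blk q, t0) (fun _ => δ)]
            rw [if_pos hchS]
          calc G.costS (G.run (ρ ++ [p])).F + G.Gam (G.run (ρ ++ [p])).H
              = G.costS s.F + G.Gam s.H + δ * Bl.card := by
                rw [hcostF]
                linarith [hGam]
            _ ≤ G.k * (∑ x ∈ S.filter (fun x => 1 ≤ x.2), χ x) + δ * G.k := by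
                have h2 : δ * (Bl.card : ℝ) ≤ δ * (G.k : ℝ) :=
                  mul_le_mul_of_nonneg_left hBlcard hδ0
                linarith [hχcost]
            _ = G.k * ∑ x ∈ S.filter (fun x => 1 ≤ x.2), χ' x := by
                rw [hsumχ']
                ring

end BlockSystem

/-- a deterministic online eviction algorithm that is
`k`-competitive for block-aware caching with eviction cost.  `A` maps each
request sequence to a set of flushes; decisions are online and irrevocable
(on a prefix `σ'` of `σ`, `A σ' ⊆ A σ` and the new flushes have times beyond
`|σ'|`), the output is always feasible, and its eviction cost is at most
`k` times the cost of any feasible set of flushes. -/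
theorem deterministic_online_k_competitive (G : BlockSystem) :
    ∃ A : List (Fin G.n) → Finset (Fin G.m × ℕ),
      (∀ σ, ∀ x ∈ A σ, x.2 ≤ σ.length) ∧
      (∀ σ' σ : List (Fin G.n), σ' <+: σ →
        A σ' ⊆ A σ ∧ ∀ x ∈ A σ, x ∉ A σ' → σ'.length + 1 ≤ x.2) ∧
      (∀ σ, G.Feasible σ ↑(A σ)) ∧
      (∀ σ (S : Finset (Fin G.m × ℕ)), (∀ x ∈ S, x.2 ≤ σ.length) →
        G.Feasible σ ↑S → G.costS (A σ) ≤ (G.k : ℝ) * G.costS S) := by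
  refine ⟨fun σ => (G.run σ).F, ?_, ?_, ?_, ?_⟩
  · intro σ x hx
    exact (G.inv_run σ).times x hx
  · intro σ' σ hpre
    exact G.run_prefix hpre
  · intro σ
    exact G.feasible_run σ
  · intro σ S hT hFe
    obtain ⟨χ, hχ0, hχz, hχc, hχact, hχcost⟩ :=
      G.charge σ S hT hFe σ (List.prefix_refl σ)
    have hGam0 : 0 ≤ G.Gam (G.run σ).H :=
      Finset.sum_nonneg fun B _ => sub_nonneg.mpr ((G.inv_run σ).Hle B)
    have hsum : ∑ x ∈ S.filter (fun x => 1 ≤ x.2), χ x ≤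
        ∑ x ∈ S.filter (fun x => 1 ≤ x.2), G.c x.1 :=
      Finset.sum_le_sum hχc
    have hk0 : (0:ℝ) ≤ (G.k : ℝ) := Nat.cast_nonneg _
    calc G.costS (G.run σ).F ≤ G.costS (G.run σ).F + G.Gam (G.run σ).H := by linarith
      _ ≤ G.k * ∑ x ∈ S.filter (fun x => 1 ≤ x.2), χ x := hχcost
      _ ≤ G.k * ∑ x ∈ S.filter (fun x => 1 ≤ x.2), G.c x.1 :=
          mul_le_mul_of_nonneg_left hsum hk0
      _ = G.k * G.costS S := rfl
end

section
/- For every block-aware caching instance and every vector φ ∈ [0,1]^{𝓑 × {0,…,T}}, the fractional fetching cost satisfies c_Fetch(φ) ≤ β · (c(φ) + ∑_{B ∈ 𝓑} c_B). -/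
open scoped Classical

namespace BlockInstance

variable (I : BlockInstance)

/-- The last time in `{1,…,t-1}` at which the page `p_t` requested at time `t`
was previously requested (junk value `0` if there is none). -/
noncomputable def lastReqBefore (t : ℕ) : ℕ :=
  Nat.findGreatest (fun u => 1 ≤ u ∧ I.req u = I.req t) (t - 1)

/-- `x̂_t`: the fraction of the page `p_t` missing just before it is served at
time `t`; it is `1` if `p_t` was not requested strictly before `t`, and
`min(1, ∑_{u=r'+1}^{t} φ_{B(p_t)}^u)` otherwise. -/
noncomputable def xhat (φ : Fin I.m × ℕ → ℝ) (t : ℕ) : ℝ :=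
  if ∃ u, 1 ≤ u ∧ u < t ∧ I.req u = I.req t then
    min 1 (∑ u ∈ Finset.Ioc (I.lastReqBefore t) t, φ (I.blk (I.req t), u))
  else 1

/-- The fractional fetching cost `∑_{t=1}^{T} c_{B(p_t)} · x̂_t`. -/
noncomputable def fetchCostφ (φ : Fin I.m × ℕ → ℝ) : ℝ :=
  ∑ t ∈ Finset.Icc 1 I.T, I.c (I.blk (I.req t)) * I.xhat φ t

end BlockInstance

namespace BlockInstance

variable (I : BlockInstance)

lemma lastReqBefore_lt {t : ℕ} (ht : 1 ≤ t) : I.lastReqBefore t < t :=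
  lt_of_le_of_lt (Nat.findGreatest_le _) (Nat.sub_lt ht one_pos)

lemma le_lastReqBefore {u t : ℕ} (h1 : 1 ≤ u) (h2 : u < t) (h3 : I.req u = I.req t) :
    u ≤ I.lastReqBefore t :=
  Nat.le_findGreatest (Nat.le_sub_one_of_lt h2) ⟨h1, h3⟩

lemma lastReqBefore_ge_one {t : ℕ}
    (h : ∃ u, 1 ≤ u ∧ u < t ∧ I.req u = I.req t) : 1 ≤ I.lastReqBefore t := by
  obtain ⟨u, h1, h2, h3⟩ := h
  exact le_trans h1 (I.le_lastReqBefore h1 h2 h3)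

/-- Key per-page bound. -/
lemma page_sum (φ : Fin I.m × ℕ → ℝ)
    (hφ : ∀ (B : Fin I.m) (t : ℕ), t ≤ I.T → φ (B, t) ∈ Set.Icc (0 : ℝ) 1)
    (p : Fin I.n) :
    ∑ t ∈ (Finset.Icc 1 I.T).filter (fun t => I.req t = p), I.xhat φ t
      ≤ 1 + ∑ u ∈ Finset.Icc 1 I.T, φ (I.blk p, u) := by
  set S := (Finset.Icc 1 I.T).filter (fun t => I.req t = p) with hS
  set Q : ℕ → Prop := fun t => ∃ u, 1 ≤ u ∧ u < t ∧ I.req u = I.req t with hQ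
  have hsplit := Finset.sum_filter_add_sum_filter_not S Q (I.xhat φ)
  rw [← hsplit]
  have hmemS : ∀ t ∈ S, 1 ≤ t ∧ t ≤ I.T ∧ I.req t = p := by
    intro t ht
    simp only [hS, Finset.mem_filter, Finset.mem_Icc] at ht
    exact ⟨ht.1.1, ht.1.2, ht.2⟩
  -- no-prior part ≤ 1
  have hnot : ∑ t ∈ S.filter (fun t => ¬ Q t), I.xhat φ t ≤ 1 := by
    have hcard : (S.filter (fun t => ¬ Q t)).card ≤ 1 := by
      rw [Finset.card_le_one]
      intro a ha b hb
      simp only [Finset.mem_filter] at ha hb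
      by_contra hne
      rcases lt_or_gt_of_ne hne with h | h
      · exact hb.2 ⟨a, (hmemS a ha.1).1, h, by rw [(hmemS a ha.1).2.2, (hmemS b hb.1).2.2]⟩
      · exact ha.2 ⟨b, (hmemS b hb.1).1, h, by rw [(hmemS b hb.1).2.2, (hmemS a ha.1).2.2]⟩
    calc ∑ t ∈ S.filter (fun t => ¬ Q t), I.xhat φ t
        ≤ ∑ _t ∈ S.filter (fun t => ¬ Q t), (1 : ℝ) := by
          apply Finset.sum_le_sum
          intro t ht
          simp only [Finset.mem_filter] at ht
          unfold xhat
          rw [if_neg ht.2]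
      _ = (S.filter (fun t => ¬ Q t)).card := by simp
      _ ≤ 1 := by exact_mod_cast hcard
  -- prior part ≤ ∑ φ
  have hyes : ∑ t ∈ S.filter Q, I.xhat φ t
      ≤ ∑ u ∈ Finset.Icc 1 I.T, φ (I.blk p, u) := by
    have step1 : ∑ t ∈ S.filter Q, I.xhat φ t
        ≤ ∑ t ∈ S.filter Q, ∑ u ∈ Finset.Ioc (I.lastReqBefore t) t, φ (I.blk p, u) := by
      apply Finset.sum_le_sum
      intro t ht
      simp only [Finset.mem_filter] at ht
      unfold xhat
      rw [if_pos ht.2, (hmemS t ht.1).2.2]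
      exact min_le_right _ _
    refine le_trans step1 ?_
    rw [← Finset.sum_biUnion ?disj]
    case disj =>
      intro a ha b hb hne
      simp only [Finset.coe_filter, Set.mem_setOf_eq] at ha hb
      have key : ∀ x y : ℕ, x ∈ S → y ∈ S → x < y →
          Disjoint (Finset.Ioc (I.lastReqBefore x) x) (Finset.Ioc (I.lastReqBefore y) y) := by
        intro x y hx hy hxy
        have hxr : x ≤ I.lastReqBefore y :=
          I.le_lastReqBefore (hmemS x hx).1 hxy (by rw [(hmemS x hx).2.2, (hmemS y hy).2.2])
        rw [Finset.disjoint_left]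
        intro u hu hu'
        rw [Finset.mem_Ioc] at hu hu'
        exact absurd hu'.1 (not_lt.2 (le_trans hu.2 hxr))
      rcases lt_or_gt_of_ne hne with h | h
      · exact key a b ha.1 hb.1 h
      · exact (key b a hb.1 ha.1 h).symm
    apply Finset.sum_le_sum_of_subset_of_nonneg
    · intro u hu
      simp only [Finset.mem_biUnion] at hu
      obtain ⟨t, ht, hu⟩ := hu
      simp only [Finset.mem_filter] at ht
      rw [Finset.mem_Ioc] at hu
      rw [Finset.mem_Icc]
      exact ⟨Nat.one_le_iff_ne_zero.2 (Nat.lt_of_le_of_lt (Nat.zero_le _) hu.1).ne', le_trans hu.2 (hmemS t ht.1).2.1⟩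
    · intro u hu _
      rw [Finset.mem_Icc] at hu
      exact (hφ _ u hu.2).1
  linarith

end BlockInstance

/-- for every fractional solution `φ ∈ [0,1]^{𝓑 × {0,…,T}}`, the
fractional fetching cost is at most `β · (c(φ) + ∑_B c_B)`. -/
theorem fetchCost_le_beta_mul (I : BlockInstance) (φ : Fin I.m × ℕ → ℝ)
    (hφ : ∀ (B : Fin I.m) (t : ℕ), t ≤ I.T → φ (B, t) ∈ Set.Icc (0 : ℝ) 1) :
    I.fetchCostφ φ ≤ (I.β : ℝ) * (I.costφ φ + ∑ b : Fin I.m, I.c b) := by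
  classical
  unfold BlockInstance.fetchCostφ
  -- fiber over pages
  have hfib : ∑ t ∈ Finset.Icc 1 I.T, I.c (I.blk (I.req t)) * I.xhat φ t
      = ∑ p : Fin I.n, ∑ t ∈ (Finset.Icc 1 I.T).filter (fun t => I.req t = p),
          I.c (I.blk (I.req t)) * I.xhat φ t :=
    (Finset.sum_fiberwise (Finset.Icc 1 I.T) I.req
      (fun t => I.c (I.blk (I.req t)) * I.xhat φ t)).symm
  rw [hfib]
  set G : Fin I.m → ℝ := fun b => I.c b * (1 + ∑ u ∈ Finset.Icc 1 I.T, φ (b, u)) with hG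
  have hGnn : ∀ b, 0 ≤ G b := by
    intro b
    have h1 : (0:ℝ) ≤ ∑ u ∈ Finset.Icc 1 I.T, φ (b, u) := by
      apply Finset.sum_nonneg
      intro u hu
      rw [Finset.mem_Icc] at hu
      exact (hφ b u hu.2).1
    exact mul_nonneg (I.c_pos b).le (by linarith)
  have step1 : ∑ p : Fin I.n, ∑ t ∈ (Finset.Icc 1 I.T).filter (fun t => I.req t = p),
      I.c (I.blk (I.req t)) * I.xhat φ t ≤ ∑ p : Fin I.n, G (I.blk p) := by
    apply Finset.sum_le_sum
    intro p _
    have heq : ∑ t ∈ (Finset.Icc 1 I.T).filter (fun t => I.req t = p),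
        I.c (I.blk (I.req t)) * I.xhat φ t
        = I.c (I.blk p) * ∑ t ∈ (Finset.Icc 1 I.T).filter (fun t => I.req t = p),
            I.xhat φ t := by
      rw [Finset.mul_sum]
      apply Finset.sum_congr rfl
      intro t ht
      rw [Finset.mem_filter] at ht
      rw [ht.2]
    rw [heq, hG]
    exact mul_le_mul_of_nonneg_left (I.page_sum φ hφ p) (I.c_pos _).le
  have step2 : ∑ p : Fin I.n, G (I.blk p) ≤ (I.β : ℝ) * ∑ b : Fin I.m, G b := by
    have hfib2 : ∑ p : Fin I.n, G (I.blk p)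
        = ∑ b : Fin I.m, ∑ p ∈ Finset.univ.filter (fun p => I.blk p = b), G (I.blk p) :=
      (Finset.sum_fiberwise Finset.univ I.blk (fun p => G (I.blk p))).symm
    rw [hfib2, Finset.mul_sum]
    apply Finset.sum_le_sum
    intro b _
    have : ∑ p ∈ Finset.univ.filter (fun p => I.blk p = b), G (I.blk p)
        = ((Finset.univ.filter (fun p => I.blk p = b)).card : ℝ) * G b := by
      rw [← nsmul_eq_mul, ← Finset.sum_const]
      apply Finset.sum_congr rfl
      intro p hp
      rw [Finset.mem_filter] at hp
      rw [hp.2]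
    rw [this]
    apply mul_le_mul_of_nonneg_right _ (hGnn b)
    exact_mod_cast I.block_size b
  have step3 : (I.β : ℝ) * ∑ b : Fin I.m, G b
      = (I.β : ℝ) * (I.costφ φ + ∑ b : Fin I.m, I.c b) := by
    congr 1
    unfold BlockInstance.costφ
    rw [← Finset.sum_add_distrib]
    apply Finset.sum_congr rfl
    intro b _
    rw [hG, ← Finset.mul_sum]
    ring
  linarith
end

section
/- For every block-aware caching instance with empty initial cache and every feasible solution (x, φ) to the naive fetching LP, there exists a sequence C_0 = ∅, C_1, …, C_T of subsets of P with p_t ∈ C_t and |C_t| ≤ 2k for every t ∈ {1,…,T}, whose fetching cost is at most 2 · ∑_{B,t} c_B · φ_B^t. -/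
open scoped Classical

/-- Rounded cache: a page is kept while `x < 1/2`; it enters when its block's
requested page is newly fetched (in particular at its own requests). -/
noncomputable def rcAux (n m : ℕ) (blk : Fin n → Fin m) (req : ℕ → Fin n)
    (x : Fin n → ℕ → ℝ) : ℕ → Finset (Fin n)
  | 0 => ∅
  | (t+1) => Finset.univ.filter fun q =>
      x q (t+1) < 1/2 ∧ (q ∈ rcAux n m blk req x t ∨
        (blk q = blk (req (t+1)) ∧ req (t+1) ∉ rcAux n m blk req x t))

lemma rcAux_zero (n m : ℕ) (blk : Fin n → Fin m) (req : ℕ → Fin n)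
    (x : Fin n → ℕ → ℝ) : rcAux n m blk req x 0 = ∅ := rfl

lemma mem_rcAux_succ (n m : ℕ) (blk : Fin n → Fin m) (req : ℕ → Fin n)
    (x : Fin n → ℕ → ℝ) (t : ℕ) (p : Fin n) :
    p ∈ rcAux n m blk req x (t+1) ↔
      x p (t+1) < 1/2 ∧ (p ∈ rcAux n m blk req x t ∨
        (blk p = blk (req (t+1)) ∧ req (t+1) ∉ rcAux n m blk req x t)) := by
  simp [rcAux]

lemma telescopeAux (g : ℕ → ℝ) : ∀ b a, a ≤ b →
    ∑ u ∈ Finset.Icc (a+1) b, (g (u-1) - g u) = g a - g b := by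
  intro b
  induction b with
  | zero => intro a ha; interval_cases a; simp
  | succ n ih =>
    intro a ha
    rcases Nat.lt_or_ge a (n+1) with h | h
    · have h' : a ≤ n := Nat.lt_succ_iff.mp h
      rw [Finset.sum_Icc_succ_top (by omega), ih a h']
      simp
    · have : a = n+1 := le_antisymm ha h
      subst this
      simp

/-- every feasible solution `(x, φ)` of the naive fetching LP
(with empty initial cache) can be rounded online into a cache sequence serving
all requests, using at most `2k` cache space, whose fetching cost is at most
twice the LP cost. -/
theorem naive_fetching_LP_rounding (I : BlockInstance)
    (x : Fin I.n → ℕ → ℝ) (φ : Fin I.m → ℕ → ℝ)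
    (hx01 : ∀ (p : Fin I.n) (t : ℕ), t ≤ I.T → x p t ∈ Set.Icc (0 : ℝ) 1)
    (hφ01 : ∀ (b : Fin I.m) (t : ℕ), 1 ≤ t → t ≤ I.T → φ b t ∈ Set.Icc (0 : ℝ) 1)
    (hx0 : ∀ p, x p 0 = 1)
    (hserve : ∀ t, 1 ≤ t → t ≤ I.T → x (I.req t) t = 0)
    (hcache : ∀ t, 1 ≤ t → t ≤ I.T → (I.n : ℝ) - I.k ≤ ∑ p, x p t)
    (hfetch : ∀ t, 1 ≤ t → t ≤ I.T → ∀ p, x p (t - 1) - x p t ≤ φ (I.blk p) t) :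
    ∃ C : ℕ → Finset (Fin I.n), C 0 = ∅ ∧
      (∀ t, 1 ≤ t → t ≤ I.T → I.req t ∈ C t ∧ (C t).card ≤ 2 * I.k) ∧
      I.fetchCost C ≤ 2 * ∑ b : Fin I.m, ∑ t ∈ Finset.Icc 1 I.T, I.c b * φ b t := by
  classical
  set C : ℕ → Finset (Fin I.n) := rcAux I.n I.m I.blk I.req x with hCdef
  have hmem : ∀ (t : ℕ) (p : Fin I.n), p ∈ C (t+1) ↔
      x p (t+1) < 1/2 ∧ (p ∈ C t ∨
        (I.blk p = I.blk (I.req (t+1)) ∧ I.req (t+1) ∉ C t)) := by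
    intro t p; exact mem_rcAux_succ _ _ _ _ _ _ _
  have hC0 : C 0 = ∅ := rfl
  -- every member of C t has x < 1/2 (for t ≥ 1)
  have hsmall : ∀ t, 1 ≤ t → ∀ p, p ∈ C t → x p t < 1/2 := by
    intro t ht p hp
    cases t with
    | zero => omega
    | succ s => exact ((hmem s p).mp hp).1
  -- the request is always served
  have hreq : ∀ t, 1 ≤ t → t ≤ I.T → I.req t ∈ C t := by
    intro t h1 h2
    cases t with
    | zero => omega
    | succ s =>
      rw [hmem]
      refine ⟨by rw [hserve (s+1) h1 h2]; norm_num, ?_⟩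
      by_cases h : I.req (s+1) ∈ C s
      · exact Or.inl h
      · exact Or.inr ⟨rfl, h⟩
  -- cache size bound
  have hcard : ∀ t, 1 ≤ t → t ≤ I.T → (C t).card ≤ 2 * I.k := by
    intro t h1 h2
    set A : Finset (Fin I.n) := Finset.univ.filter (fun q => x q t < 1/2) with hA
    have hsubA : C t ⊆ A := by
      intro q hq
      simp only [hA, Finset.mem_filter, Finset.mem_univ, true_and]
      exact hsmall t h1 q hq
    have hAcard : A.card ≤ 2 * I.k := by
      have hsplit : ∑ q ∈ A, x q t + ∑ q ∈ Aᶜ, x q t = ∑ q, x q t := by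
        rw [Finset.sum_add_sum_compl]
      have h1A : ∑ q ∈ A, x q t ≤ (A.card : ℝ) * (1/2) := by
        have := Finset.sum_le_card_nsmul A (fun q => x q t) (1/2)
          (fun q hq => le_of_lt (by simpa [hA] using (Finset.mem_filter.mp hq).2))
        simpa [nsmul_eq_mul] using this
      have h2A : ∑ q ∈ Aᶜ, x q t ≤ (Aᶜ.card : ℝ) := by
        have := Finset.sum_le_card_nsmul Aᶜ (fun q => x q t) 1
          (fun q _ => (hx01 q t h2).2)
        simp only [nsmul_eq_mul, mul_one] at this
        exact this
      have hcards : A.card + Aᶜ.card = I.n := by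
        have := Finset.card_add_card_compl A
        simp only [Fintype.card_fin] at this
        exact this
      have hsum := hcache t h1 h2
      have : (I.n : ℝ) - I.k ≤ (A.card : ℝ) * (1/2) + (Aᶜ.card : ℝ) := by
        calc (I.n : ℝ) - I.k ≤ ∑ q, x q t := hsum
          _ = ∑ q ∈ A, x q t + ∑ q ∈ Aᶜ, x q t := hsplit.symm
          _ ≤ (A.card : ℝ) * (1/2) + (Aᶜ.card : ℝ) := add_le_add h1A h2A
      have hcast : (A.card : ℝ) + (Aᶜ.card : ℝ) = (I.n : ℝ) := by
        exact_mod_cast congrArg (Nat.cast (R := ℝ)) hcards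
      have : (A.card : ℝ) ≤ 2 * (I.k : ℝ) := by linarith
      exact_mod_cast this
    exact le_trans (Finset.card_le_card hsubA) hAcard
  -- persistence
  have persist : ∀ (p : Fin I.n) (u w : ℕ), u ≤ w → p ∈ C u →
      (∀ v, u < v → v ≤ w → x p v < 1/2) → p ∈ C w := by
    intro p u w huw
    induction w, huw using Nat.le_induction with
    | base => intro h _; exact h
    | succ w hw ih =>
      intro hu hlt
      have hpw : p ∈ C w := ih hu (fun v hv1 hv2 => hlt v hv1 (by omega))
      rw [hmem]
      exact ⟨hlt (w+1) (by omega) le_rfl, Or.inl hpw⟩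
  -- entering pages belong to the requested block, and the request was absent
  have henter : ∀ (t : ℕ) (p : Fin I.n), 1 ≤ t → p ∈ C t → p ∉ C (t-1) →
      I.blk p = I.blk (I.req t) ∧ I.req t ∉ C (t-1) := by
    intro t p h1 hp hp'
    cases t with
    | zero => omega
    | succ s =>
      simp only [Nat.add_sub_cancel] at hp' ⊢
      rcases ((hmem s p).mp hp).2 with h | h
      · exact absurd h hp'
      · exact h
  -- the last time before t at which x (req t) was ≥ 1/2
  set E : ℕ → ℕ := fun t => Nat.findGreatest (fun u => 1/2 ≤ x (I.req t) u) (t-1)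
    with hEdef
  have hEle : ∀ t, E t ≤ t - 1 := fun t => Nat.findGreatest_le _
  have hEspec : ∀ t, 1/2 ≤ x (I.req t) (E t) := by
    intro t
    have h0 : (1:ℝ)/2 ≤ x (I.req t) 0 := by rw [hx0]; norm_num
    simp only [hEdef]
    exact Nat.findGreatest_spec (P := fun u => 1/2 ≤ x (I.req t) u)
      (Nat.zero_le (t-1)) h0
  have hEgt : ∀ t u, 1 ≤ t → E t < u → u < t → x (I.req t) u < 1/2 := by
    intro t u h1 h2 h3
    have := Nat.findGreatest_is_greatest (P := fun u => 1/2 ≤ x (I.req t) u)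
      h2 (by omega)
    linarith [lt_of_not_ge this]
  -- charging: each fetch has φ-mass ≥ 1/2 on (E t, t]
  have charge : ∀ t, 1 ≤ t → t ≤ I.T →
      1/2 ≤ ∑ u ∈ Finset.Icc (E t + 1) t, φ (I.blk (I.req t)) u := by
    intro t h1 h2
    have hEt : E t ≤ t := le_trans (hEle t) (by omega)
    have htele := telescopeAux (fun u => x (I.req t) u) t (E t) hEt
    have hle : ∀ u ∈ Finset.Icc (E t + 1) t,
        x (I.req t) (u-1) - x (I.req t) u ≤ φ (I.blk (I.req t)) u := by
      intro u hu
      rw [Finset.mem_Icc] at hu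
      exact hfetch u (by omega) (by omega) (I.req t)
    calc (1:ℝ)/2 ≤ x (I.req t) (E t) - x (I.req t) t := by
          rw [hserve t h1 h2]; simpa using hEspec t
      _ = ∑ u ∈ Finset.Icc (E t + 1) t, (x (I.req t) (u-1) - x (I.req t) u) :=
          htele.symm
      _ ≤ ∑ u ∈ Finset.Icc (E t + 1) t, φ (I.blk (I.req t)) u :=
          Finset.sum_le_sum hle
  -- ordering: earlier fetches of the same block end before E t
  have horder : ∀ t1 t2, 1 ≤ t1 → t1 < t2 → t2 ≤ I.T →
      I.blk (I.req t1) = I.blk (I.req t2) →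
      I.req t1 ∉ C (t1 - 1) → I.req t2 ∉ C (t2 - 1) → t1 ≤ E t2 := by
    intro t1 t2 h1 h12 h2T hblk hr1 hr2
    by_contra hcon
    push_neg at hcon
    have hx1 : x (I.req t2) t1 < 1/2 := hEgt t2 t1 (by omega) hcon h12
    have hpC1 : I.req t2 ∈ C t1 := by
      cases t1 with
      | zero => omega
      | succ s =>
        rw [hmem]
        refine ⟨hx1, Or.inr ⟨hblk.symm, by simpa using hr1⟩⟩
    have hpC : I.req t2 ∈ C (t2 - 1) := by
      refine persist (I.req t2) t1 (t2-1) (by omega) hpC1 ?_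
      intro v hv1 hv2
      exact hEgt t2 v (by omega) (by omega) (by omega)
    exact hr2 hpC
  refine ⟨C, hC0, fun t h1 h2 => ⟨hreq t h1 h2, hcard t h1 h2⟩, ?_⟩
  -- compute the fetch cost
  have hinner : ∀ t ∈ Finset.Icc 1 I.T,
      (∑ b ∈ Finset.univ.filter
        (fun b : Fin I.m => ∃ p, I.blk p = b ∧ p ∈ C t ∧ p ∉ C (t - 1)), I.c b)
      = if I.req t ∉ C (t-1) then I.c (I.blk (I.req t)) else 0 := by
    intro t ht
    rw [Finset.mem_Icc] at ht
    by_cases hr : I.req t ∉ C (t-1)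
    · rw [if_pos hr]
      have : Finset.univ.filter
          (fun b : Fin I.m => ∃ p, I.blk p = b ∧ p ∈ C t ∧ p ∉ C (t - 1))
          = {I.blk (I.req t)} := by
        ext b
        simp only [Finset.mem_filter, Finset.mem_univ, true_and,
          Finset.mem_singleton]
        constructor
        · rintro ⟨p, rfl, hp1, hp2⟩
          exact (henter t p ht.1 hp1 hp2).1
        · rintro rfl
          exact ⟨I.req t, rfl, hreq t ht.1 ht.2, hr⟩
      rw [this, Finset.sum_singleton]
    · rw [if_neg hr]
      push_neg at hr
      have : Finset.univ.filter
          (fun b : Fin I.m => ∃ p, I.blk p = b ∧ p ∈ C t ∧ p ∉ C (t - 1))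
          = ∅ := by
        ext b
        simp only [Finset.mem_filter, Finset.mem_univ, true_and,
          Finset.notMem_empty, iff_false, not_exists]
        rintro p ⟨rfl, hp1, hp2⟩
        exact (henter t p ht.1 hp1 hp2).2 hr
      rw [this, Finset.sum_empty]
  set Fet : Finset ℕ := (Finset.Icc 1 I.T).filter (fun t => I.req t ∉ C (t-1))
    with hFet
  have hcost : I.fetchCost C = ∑ t ∈ Fet, I.c (I.blk (I.req t)) := by
    unfold BlockInstance.fetchCost
    rw [Finset.sum_congr rfl hinner, hFet, Finset.sum_filter]
  rw [hcost]
  -- group by block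
  have hgroup : ∑ t ∈ Fet, I.c (I.blk (I.req t))
      = ∑ b : Fin I.m, ∑ t ∈ Fet.filter (fun t => I.blk (I.req t) = b),
          I.c (I.blk (I.req t)) := by
    exact (Finset.sum_fiberwise_of_maps_to (fun t _ => Finset.mem_univ _) _).symm
  rw [hgroup, Finset.mul_sum]
  refine Finset.sum_le_sum ?_
  intro b _
  set F : Finset ℕ := Fet.filter (fun t => I.blk (I.req t) = b) with hF
  have hFmem : ∀ t ∈ F, 1 ≤ t ∧ t ≤ I.T ∧ I.req t ∉ C (t-1) ∧
      I.blk (I.req t) = b := by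
    intro t ht
    rw [hF, Finset.mem_filter, hFet, Finset.mem_filter, Finset.mem_Icc] at ht
    exact ⟨ht.1.1.1, ht.1.1.2, ht.1.2, ht.2⟩
  -- pairwise disjoint charging intervals
  have hdisj : (F : Set ℕ).PairwiseDisjoint (fun t => Finset.Icc (E t + 1) t) := by
    intro t1 ht1 t2 ht2 hne
    simp only [Finset.coe_mem, Finset.mem_coe] at ht1 ht2
    obtain ⟨h11, h12, h13, h14⟩ := hFmem t1 ht1
    obtain ⟨h21, h22, h23, h24⟩ := hFmem t2 ht2
    simp only [Function.onFun]
    rcases lt_or_gt_of_ne hne with h | h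
    · have := horder t1 t2 h11 h h22 (h14.trans h24.symm) h13 h23
      rw [Finset.disjoint_left]
      intro u hu1 hu2
      rw [Finset.mem_Icc] at hu1 hu2
      omega
    · have := horder t2 t1 h21 h h12 (h24.trans h14.symm) h23 h13
      rw [Finset.disjoint_left]
      intro u hu1 hu2
      rw [Finset.mem_Icc] at hu1 hu2
      omega
  have hkey : ∑ t ∈ F, ∑ u ∈ Finset.Icc (E t + 1) t, φ b u
      ≤ ∑ u ∈ Finset.Icc 1 I.T, φ b u := by
    rw [← Finset.sum_biUnion hdisj]
    refine Finset.sum_le_sum_of_subset_of_nonneg ?_ ?_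
    · intro u hu
      rw [Finset.mem_biUnion] at hu
      obtain ⟨t, ht, hu⟩ := hu
      obtain ⟨h1, h2, -, -⟩ := hFmem t ht
      rw [Finset.mem_Icc] at hu ⊢
      omega
    · intro u hu _
      rw [Finset.mem_Icc] at hu
      exact (hφ01 b u hu.1 hu.2).1
  have hcb : (0:ℝ) ≤ I.c b := le_of_lt (I.c_pos b)
  calc ∑ t ∈ F, I.c (I.blk (I.req t))
      ≤ ∑ t ∈ F, 2 * I.c b * (∑ u ∈ Finset.Icc (E t + 1) t, φ b u) := by
        refine Finset.sum_le_sum ?_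
        intro t ht
        obtain ⟨h1, h2, -, h4⟩ := hFmem t ht
        have hch := charge t h1 h2
        rw [h4] at hch
        rw [h4]
        nlinarith
    _ = 2 * I.c b * ∑ t ∈ F, ∑ u ∈ Finset.Icc (E t + 1) t, φ b u := by
        rw [Finset.mul_sum]
    _ ≤ 2 * I.c b * ∑ u ∈ Finset.Icc 1 I.T, φ b u :=
        mul_le_mul_of_nonneg_left hkey (by linarith)
    _ = 2 * ∑ t ∈ Finset.Icc 1 I.T, I.c b * φ b t := by
        rw [mul_assoc, Finset.mul_sum]
end

section
/- For every block-aware caching instance with empty initial cache and every feasible solution (x, φ) to the naive eviction LP, there exists a sequence C_0 = ∅, C_1, …, C_T of subsets of P with p_t ∈ C_t and |C_t| ≤ 2k for every t ∈ {1,…,T}, whose eviction cost is at most 2 · ∑_{B,t} c_B · φ_B^t. -/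
open scoped Classical

private theorem tele_aux (f : ℕ → ℝ) (T : ℕ) :
    ∑ t ∈ Finset.Icc 1 T, (f t - f (t-1)) = f T - f 0 := by
  induction T with
  | zero => simp
  | succ n ih => rw [Finset.sum_Icc_succ_top (Nat.succ_le_succ (Nat.zero_le n)), ih]; simp

/-- every feasible solution `(x, φ)` of the naive eviction LP
(with empty initial cache) can be rounded into a cache sequence serving all
requests, using at most `2k` cache space, whose eviction cost is at most twice
the LP cost. -/
theorem naive_eviction_LP_rounding (I : BlockInstance)
    (x : Fin I.n → ℕ → ℝ) (φ : Fin I.m → ℕ → ℝ)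
    (hx01 : ∀ (p : Fin I.n) (t : ℕ), t ≤ I.T → x p t ∈ Set.Icc (0 : ℝ) 1)
    (hφ01 : ∀ (b : Fin I.m) (t : ℕ), 1 ≤ t → t ≤ I.T → φ b t ∈ Set.Icc (0 : ℝ) 1)
    (hx0 : ∀ p, x p 0 = 1)
    (hserve : ∀ t, 1 ≤ t → t ≤ I.T → x (I.req t) t = 0)
    (hcache : ∀ t, 1 ≤ t → t ≤ I.T → (I.n : ℝ) - I.k ≤ ∑ p, x p t)
    (hevict : ∀ t, 1 ≤ t → t ≤ I.T → ∀ p, x p t - x p (t - 1) ≤ φ (I.blk p) t) :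
    ∃ C : ℕ → Finset (Fin I.n), C 0 = ∅ ∧
      (∀ t, 1 ≤ t → t ≤ I.T → I.req t ∈ C t ∧ (C t).card ≤ 2 * I.k) ∧
      I.evictCost C ≤ 2 * ∑ b : Fin I.m, ∑ t ∈ Finset.Icc 1 I.T, I.c b * φ b t := by
  classical
  set Φ : Fin I.m → ℕ → ℝ := fun b t => ∑ u ∈ Finset.Icc 1 t, φ b u with hΦdef
  set N : Fin I.m → ℕ → ℕ := fun b t => ⌊2 * Φ b t⌋₊ with hNdef
  have hφ0 : ∀ b t, 1 ≤ t → t ≤ I.T → 0 ≤ φ b t := fun b t h1 h2 => (hφ01 b t h1 h2).1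
  have hΦsucc : ∀ b t, Φ b (t+1) = Φ b t + φ b (t+1) := by
    intro b t
    simp only [hΦdef]
    exact Finset.sum_Icc_succ_top (Nat.succ_le_succ (Nat.zero_le t)) _
  have hΦ0 : ∀ b, Φ b 0 = 0 := by intro b; simp [hΦdef]
  have hΦnn : ∀ b t, t ≤ I.T → 0 ≤ Φ b t := by
    intro b t ht
    apply Finset.sum_nonneg
    intro u hu
    rw [Finset.mem_Icc] at hu
    exact hφ0 b u hu.1 (hu.2.trans ht)
  have hΦmono : ∀ b t, t + 1 ≤ I.T → Φ b t ≤ Φ b (t+1) := by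
    intro b t ht
    rw [hΦsucc]
    have := hφ0 b (t+1) (Nat.succ_le_succ (Nat.zero_le t)) ht
    linarith
  have hNmono : ∀ b t, 1 ≤ t → t ≤ I.T → N b (t-1) ≤ N b t := by
    intro b t h1 h2
    have ht : t - 1 + 1 = t := Nat.succ_pred_eq_of_pos h1
    have h2' := hΦmono b (t-1) (by rwa [ht])
    rw [ht] at h2'
    simp only [hNdef]
    exact Nat.floor_le_floor (by linarith)
  set Fl : Fin I.m → ℕ → Prop :=
    fun b t => t = 0 ∨ (1 ≤ t ∧ t ≤ I.T ∧ N b (t-1) < N b t) with hFldef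
  set Miss : ℕ → Fin I.n → Prop := fun τ p =>
    ∃ t, t ≤ τ ∧ Fl (I.blk p) t ∧ ∀ u, t ≤ u → u ≤ τ → 1 ≤ u → I.req u ≠ p with hMissdef
  set C : ℕ → Finset (Fin I.n) := fun τ =>
    if τ = 0 then ∅ else Finset.univ.filter (fun p => ¬ Miss τ p) with hCdef
  have hmemC : ∀ τ p, 1 ≤ τ → (p ∈ C τ ↔ ¬ Miss τ p) := by
    intro τ p h
    have hne : τ ≠ 0 := Nat.one_le_iff_ne_zero.mp h
    simp [hCdef, hne]
  -- telescoping bound on x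
  have htel : ∀ p r, 1 ≤ r → I.req r = p → ∀ τ, r ≤ τ → τ ≤ I.T →
      x p τ ≤ Φ (I.blk p) τ - Φ (I.blk p) r := by
    intro p r hr1 hreq τ hrτ
    induction τ, hrτ using Nat.le_induction with
    | base =>
      intro hrT
      rw [← hreq, hserve r hr1 hrT]
      simp
    | succ τ hrτ ih =>
      intro hT
      have ih' := ih (le_trans (Nat.le_succ τ) hT)
      have he := hevict (τ+1) (Nat.succ_le_succ (Nat.zero_le τ)) hT p
      simp only [Nat.add_sub_cancel] at he
      rw [hΦsucc]
      linarith
  -- constancy of N without crossings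
  have hconst : ∀ b r τ, r ≤ τ → τ ≤ I.T →
      (∀ t, r < t → t ≤ τ → ¬ (N b (t-1) < N b t)) → N b τ = N b r := by
    intro b r τ hrτ
    induction τ, hrτ using Nat.le_induction with
    | base => intro _ _; rfl
    | succ τ hrτ ih =>
      intro hT hnc
      have h1 : N b τ = N b r := ih (le_trans (Nat.le_succ τ) hT)
        (fun t ht1 ht2 => hnc t ht1 (le_trans ht2 (Nat.le_succ τ)))
      have h2 := hnc (τ+1) (Nat.lt_succ_of_le hrτ) le_rfl
      have h3 := hNmono b (τ+1) (Nat.succ_le_succ (Nat.zero_le τ)) hT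
      simp only [Nat.add_sub_cancel] at h2 h3
      omega
  -- key: non-missing pages have small x
  have hkey : ∀ τ p, 1 ≤ τ → τ ≤ I.T → ¬ Miss τ p → x p τ < 1/2 := by
    intro τ p hτ1 hτT hm
    have hreq_ex : ∃ u, 1 ≤ u ∧ u ≤ τ ∧ I.req u = p := by
      by_contra hno
      push_neg at hno
      exact hm ⟨0, Nat.zero_le τ, Or.inl rfl, fun u _ hu2 hu3 => hno u hu3 hu2⟩
    obtain ⟨u0, hu01, hu0τ, hu0p⟩ := hreq_ex
    set R := (Finset.Icc 1 τ).filter (fun u => I.req u = p) with hRdef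
    have hRne : R.Nonempty :=
      ⟨u0, Finset.mem_filter.mpr ⟨Finset.mem_Icc.mpr ⟨hu01, hu0τ⟩, hu0p⟩⟩
    set r := R.max' hRne with hrdef
    have hrR : r ∈ R := R.max'_mem hRne
    have hr1 : 1 ≤ r := (Finset.mem_Icc.mp (Finset.mem_filter.mp hrR).1).1
    have hrτ : r ≤ τ := (Finset.mem_Icc.mp (Finset.mem_filter.mp hrR).1).2
    have hreqr : I.req r = p := (Finset.mem_filter.mp hrR).2
    have hmax : ∀ u, 1 ≤ u → u ≤ τ → I.req u = p → u ≤ r := fun u h1 h2 h3 =>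
      R.le_max' u (Finset.mem_filter.mpr ⟨Finset.mem_Icc.mpr ⟨h1, h2⟩, h3⟩)
    have hnc : ∀ t, r < t → t ≤ τ → ¬ (N (I.blk p) (t-1) < N (I.blk p) t) := by
      intro t hrt htτ hcross
      apply hm
      refine ⟨t, htτ, Or.inr ⟨by omega, htτ.trans hτT, hcross⟩, ?_⟩
      intro u hu1 hu2 hu3 hup
      have := hmax u hu3 hu2 hup
      omega
    have hNeq : N (I.blk p) τ = N (I.blk p) r := hconst (I.blk p) r τ hrτ hτT hnc
    have hx : x p τ ≤ Φ (I.blk p) τ - Φ (I.blk p) r := htel p r hr1 hreqr τ hrτ hτT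
    have h1 : 2 * Φ (I.blk p) τ < (N (I.blk p) τ : ℝ) + 1 := by
      have := Nat.lt_floor_add_one (2 * Φ (I.blk p) τ)
      simpa [hNdef] using this
    have h2 : (N (I.blk p) r : ℝ) ≤ 2 * Φ (I.blk p) r := by
      have h0 : (0:ℝ) ≤ 2 * Φ (I.blk p) r := by
        have := hΦnn (I.blk p) r (hrτ.trans hτT); linarith
      have := Nat.floor_le h0
      simpa [hNdef] using this
    rw [hNeq] at h1
    linarith
  -- cache size bound
  have hcard : ∀ τ, 1 ≤ τ → τ ≤ I.T → (C τ).card ≤ 2 * I.k := by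
    intro τ h1 h2
    set A := Finset.univ.filter (fun p : Fin I.n => x p τ < 1/2) with hAdef
    have hsub : C τ ⊆ A := by
      intro p hp
      rw [hmemC τ p h1] at hp
      exact Finset.mem_filter.mpr ⟨Finset.mem_univ p, hkey τ p h1 h2 hp⟩
    have hsum : ∑ p, x p τ = ∑ p ∈ A, x p τ + ∑ p ∈ Aᶜ, x p τ :=
      (Finset.sum_add_sum_compl A _).symm
    have hA1 : ∑ p ∈ A, x p τ ≤ (A.card : ℝ) * (1/2) := by
      calc ∑ p ∈ A, x p τ ≤ ∑ _p ∈ A, (1/2 : ℝ) :=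
            Finset.sum_le_sum (fun p hp => le_of_lt (Finset.mem_filter.mp hp).2)
        _ = (A.card : ℝ) * (1/2) := by rw [Finset.sum_const, nsmul_eq_mul]
    have hA2 : ∑ p ∈ Aᶜ, x p τ ≤ (Aᶜ.card : ℝ) := by
      calc ∑ p ∈ Aᶜ, x p τ ≤ ∑ _p ∈ Aᶜ, (1:ℝ) :=
            Finset.sum_le_sum (fun p _ => (hx01 p τ h2).2)
        _ = (Aᶜ.card : ℝ) := by simp
    have hsn : A.card ≤ I.n := by simpa using Finset.card_le_univ A
    have hcompl : (Aᶜ.card : ℝ) = (I.n : ℝ) - A.card := by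
      rw [Finset.card_compl, Nat.cast_sub (by simpa using Finset.card_le_univ A)]
      simp
    have hlb := hcache τ h1 h2
    have hAcard : (A.card : ℝ) ≤ 2 * I.k := by linarith
    have : (C τ).card ≤ A.card := Finset.card_le_card hsub
    have hfin : ((C τ).card : ℝ) ≤ 2 * I.k := le_trans (by exact_mod_cast this) hAcard
    exact_mod_cast hfin
  -- requests are served
  have hserve' : ∀ t, 1 ≤ t → t ≤ I.T → I.req t ∈ C t := by
    intro t h1 h2
    rw [hmemC t (I.req t) h1]
    rintro ⟨t', ht't, _, hall⟩
    exact hall t ht't le_rfl h1 rfl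
  -- crossing extraction for evictions
  have hcross : ∀ t, 1 ≤ t → t ≤ I.T → ∀ b : Fin I.m,
      (∃ p, I.blk p = b ∧ p ∈ C (t-1) ∧ p ∉ C t) → N b (t-1) < N b t := by
    intro t h1 h2 b hq
    obtain ⟨p, hbp, hpin, hpout⟩ := hq
    by_cases ht1 : t = 1
    · subst ht1; simp [hCdef] at hpin
    · have h2t : 2 ≤ t := by omega
      have hnm : ¬ Miss (t-1) p := (hmemC (t-1) p (by omega)).mp hpin
      have hmt : Miss t p := by
        by_contra hc
        exact hpout ((hmemC t p h1).mpr hc)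
      obtain ⟨t', ht't, hfl, hall⟩ := hmt
      have ht'' : t' = t := by
        by_contra hne
        have ht'le : t' ≤ t - 1 := by omega
        exact hnm ⟨t', ht'le, hfl, fun u hu1 hu2 hu3 => hall u hu1 (by omega) hu3⟩
      subst ht''
      rcases hfl with h | h
      · exact absurd h (by omega)
      · rw [← hbp]; exact h.2.2
  set K : Fin I.m → Finset ℕ :=
    fun b => (Finset.Icc 1 I.T).filter (fun t => N b (t-1) < N b t) with hKdef
  have hKcard : ∀ b, ((K b).card : ℝ) ≤ 2 * Φ b I.T := by
    intro b
    have step1 : ((K b).card : ℝ) ≤ ∑ t ∈ Finset.Icc 1 I.T, ((N b t : ℝ) - N b (t-1)) := by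
      simp only [hKdef]
      rw [Finset.card_filter]
      push_cast
      apply Finset.sum_le_sum
      intro t ht
      rw [Finset.mem_Icc] at ht
      by_cases hc : N b (t-1) < N b t
      · have hc' : (N b (t-1) : ℝ) + 1 ≤ N b t := by exact_mod_cast hc
        simp only [hc, if_true]
        linarith
      · have hm := hNmono b t ht.1 ht.2
        have hm' : (N b (t-1) : ℝ) ≤ N b t := by exact_mod_cast hm
        simp only [hc, if_false]
        linarith
    have step2 : ∑ t ∈ Finset.Icc 1 I.T, ((N b t : ℝ) - N b (t-1)) = (N b I.T : ℝ) - N b 0 :=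
      tele_aux (fun t => (N b t : ℝ)) I.T
    have hN0 : N b 0 = 0 := by simp [hNdef, hΦ0]
    have hNT : (N b I.T : ℝ) ≤ 2 * Φ b I.T := by
      have h0 : (0:ℝ) ≤ 2 * Φ b I.T := by have := hΦnn b I.T le_rfl; linarith
      have := Nat.floor_le h0
      simpa [hNdef] using this
    rw [hN0] at step2
    push_cast at step2
    linarith
  have hc0 : ∀ b, 0 ≤ I.c b := fun b => le_of_lt (I.c_pos b)
  refine ⟨C, by simp [hCdef], fun t h1 h2 => ⟨hserve' t h1 h2, hcard t h1 h2⟩, ?_⟩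
  calc I.evictCost C
      = ∑ t ∈ Finset.Icc 1 I.T, ∑ b : Fin I.m,
          (if (∃ p, I.blk p = b ∧ p ∈ C (t-1) ∧ p ∉ C t) then I.c b else 0) := by
        simp only [BlockInstance.evictCost]
        exact Finset.sum_congr rfl (fun t _ => Finset.sum_filter _ _)
    _ ≤ ∑ t ∈ Finset.Icc 1 I.T, ∑ b : Fin I.m, (if t ∈ K b then I.c b else 0) := by
        refine Finset.sum_le_sum (fun t ht => Finset.sum_le_sum (fun b _ => ?_))
        rw [Finset.mem_Icc] at ht
        by_cases hq : ∃ p, I.blk p = b ∧ p ∈ C (t-1) ∧ p ∉ C t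
        · have hmem : t ∈ K b := by
            simp only [hKdef]
            exact Finset.mem_filter.mpr ⟨Finset.mem_Icc.mpr ht, hcross t ht.1 ht.2 b hq⟩
          simp [hq, hmem]
        · simp only [hq, if_false]
          split_ifs
          · exact hc0 b
          · exact le_refl 0
    _ = ∑ b : Fin I.m, ∑ t ∈ Finset.Icc 1 I.T, (if t ∈ K b then I.c b else 0) :=
        Finset.sum_comm
    _ = ∑ b : Fin I.m, ((K b).card : ℝ) * I.c b := by
        refine Finset.sum_congr rfl (fun b _ => ?_)
        rw [← Finset.sum_filter]
        have hKeq : (Finset.Icc 1 I.T).filter (fun t => t ∈ K b) = K b := by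
          rw [Finset.filter_mem_eq_inter]
          exact Finset.inter_eq_right.mpr (by simp only [hKdef]; exact Finset.filter_subset _ _)
        rw [hKeq, Finset.sum_const, nsmul_eq_mul]
    _ ≤ ∑ b : Fin I.m, 2 * Φ b I.T * I.c b := by
        refine Finset.sum_le_sum (fun b _ => ?_)
        exact mul_le_mul_of_nonneg_right (hKcard b) (hc0 b)
    _ = 2 * ∑ b : Fin I.m, ∑ t ∈ Finset.Icc 1 I.T, I.c b * φ b t := by
        rw [Finset.mul_sum]
        refine Finset.sum_congr rfl (fun b _ => ?_)
        simp only [hΦdef, Finset.mul_sum, Finset.sum_mul]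
        exact Finset.sum_congr rfl (fun t _ => by ring)
end

section
/- For all integers β ≥ 1 and L ≥ 1, every cache schedule for the gap instance I(β,L) with cache size 2β − 1 and initial cache ∅ has fetching cost at least L. -/
open scoped Classical

/-- in the gap instance `I(β,L)` — `2β` pages in two blocks
`B_1 = {p : p < β}` (block `0`) and `B_2 = {p : p ≥ β}` (block `1`) of size
`β` each, unit block costs, cache size `2β − 1`, empty initial cache, and `L`
rounds each requesting the pages `0,1,…,2β−1` in order (so the request at time
`t ∈ {1,…,2βL}` is page `(t−1) mod 2β`) — every cache schedule has fetching
cost at least `L`. -/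
theorem gap_instance_fetching_lower_bound (β L : ℕ) (hβ : 1 ≤ β) (hL : 1 ≤ L)
    (blk : Fin (2 * β) → Fin 2)
    (hblk : ∀ p : Fin (2 * β), blk p = if (p : ℕ) < β then 0 else 1)
    (req : ℕ → Fin (2 * β))
    (hreq : ∀ t : ℕ, (req t : ℕ) = (t - 1) % (2 * β)) :
    ∀ C : ℕ → Finset (Fin (2 * β)), C 0 = ∅ →
      (∀ t, 1 ≤ t → t ≤ 2 * β * L →
        req t ∈ C t ∧ (C t).card ≤ 2 * β - 1) →
      L ≤ ∑ t ∈ Finset.Icc 1 (2 * β * L),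
          (Finset.univ.filter fun b : Fin 2 =>
            ∃ p, blk p = b ∧ p ∈ C t ∧ p ∉ C (t - 1)).card := by
  intro C hC0 hC
  set f : ℕ → ℕ := fun t => (Finset.univ.filter fun b : Fin 2 =>
      ∃ p, blk p = b ∧ p ∈ C t ∧ p ∉ C (t - 1)).card with hf
  have hβ2 : 0 < 2 * β := by omega
  have key : ∀ i, i < L → ∃ t, 2*β*i + 1 ≤ t ∧ t ≤ 2*β*(i+1) ∧ 1 ≤ f t := by
    intro i hi
    by_contra h
    push_neg at h
    have hsub : ∀ t, 2*β*i + 1 ≤ t → t ≤ 2*β*(i+1) → C t ⊆ C (t-1) := by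
      intro t h1 h2 p hp
      by_contra hp'
      have h0 := h t h1 h2
      have hne : (Finset.univ.filter fun b : Fin 2 =>
          ∃ p, blk p = b ∧ p ∈ C t ∧ p ∉ C (t - 1)).Nonempty := by
        refine ⟨blk p, ?_⟩
        simp only [Finset.mem_filter, Finset.mem_univ, true_and]
        exact ⟨p, rfl, hp, hp'⟩
      have hpos : 0 < f t := Finset.card_pos.mpr hne
      omega
    have hchain : ∀ d, 2*β*i + d ≤ 2*β*(i+1) → C (2*β*i + d) ⊆ C (2*β*i) := by
      intro d
      induction d with
      | zero => intro _; simp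
      | succ n ih =>
        intro hd
        have h1 : 2*β*i + 1 ≤ 2*β*i + (n+1) := by omega
        have := hsub (2*β*i + (n+1)) h1 hd
        have heq : 2*β*i + (n+1) - 1 = 2*β*i + n := by omega
        rw [heq] at this
        exact this.trans (ih (by omega))
    have hall : ∀ p : Fin (2*β), p ∈ C (2*β*i) := by
      intro p
      set t := 2*β*i + (p : ℕ) + 1 with ht
      have hle : (p : ℕ) + 1 ≤ 2*β := p.isLt
      have ht1 : 1 ≤ t := by omega
      have hi1 : i + 1 ≤ L := hi
      have hmul : 2*β*(i+1) ≤ 2*β*L := Nat.mul_le_mul_left _ hi1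
      have ht2 : t ≤ 2*β*L := by
        have : t ≤ 2*β*(i+1) := by
          have : 2*β*(i+1) = 2*β*i + 2*β := by ring
          omega
        omega
      have hreqt : req t = p := by
        apply Fin.ext
        rw [hreq t]
        have : t - 1 = (p : ℕ) + 2*β*i := by omega
        rw [this, Nat.add_mul_mod_self_left]
        exact Nat.mod_eq_of_lt p.isLt
      have hmem : req t ∈ C t := (hC t ht1 ht2).1
      rw [hreqt] at hmem
      have hsubC : C t ⊆ C (2*β*i) := by
        have : t = 2*β*i + ((p:ℕ)+1) := by omega
        rw [this]
        apply hchain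
        have : 2*β*(i+1) = 2*β*i + 2*β := by ring
        omega
      exact hsubC hmem
    have hcard : 2*β ≤ (C (2*β*i)).card := by
      have : (Finset.univ : Finset (Fin (2*β))) ⊆ C (2*β*i) :=
        fun p _ => hall p
      calc 2*β = (Finset.univ : Finset (Fin (2*β))).card := by
            simp [Fintype.card_fin]
        _ ≤ (C (2*β*i)).card := Finset.card_le_card this
    rcases Nat.eq_zero_or_pos i with hi0 | hip
    · rw [hi0] at hcard
      simp [hC0] at hcard
      omega
    · have h1 : 1 ≤ 2*β*i := by
        have := Nat.mul_le_mul_left (2*β) hip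
        omega
      have h2 : 2*β*i ≤ 2*β*L := Nat.mul_le_mul_left _ (le_of_lt hi)
      have := (hC (2*β*i) h1 h2).2
      omega
  have key' : ∀ i, ∃ t, i < L → (2*β*i + 1 ≤ t ∧ t ≤ 2*β*(i+1) ∧ 1 ≤ f t) := by
    intro i
    by_cases h : i < L
    · obtain ⟨t, ht⟩ := key i h
      exact ⟨t, fun _ => ht⟩
    · exact ⟨0, fun h' => absurd h' h⟩
  choose g hg using key'
  set S := (Finset.Icc 1 (2*β*L)).filter (fun t => 1 ≤ f t) with hS
  have hmaps : ∀ i ∈ Finset.range L, g i ∈ S := by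
    intro i hi
    rw [Finset.mem_range] at hi
    obtain ⟨h1, h2, h3⟩ := hg i hi
    rw [hS, Finset.mem_filter, Finset.mem_Icc]
    have hmul : 2*β*(i+1) ≤ 2*β*L := Nat.mul_le_mul_left _ hi
    exact ⟨⟨by omega, by omega⟩, h3⟩
  have hinj : Set.InjOn g (Finset.range L) := by
    intro i hi j hj hij
    simp only [Finset.coe_range, Set.mem_Iio] at hi hj
    by_contra hne
    obtain ⟨hi1, hi2, _⟩ := hg i hi
    obtain ⟨hj1, hj2, _⟩ := hg j hj
    rcases lt_or_gt_of_ne hne with hlt | hlt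
    · have : 2*β*(i+1) ≤ 2*β*j := Nat.mul_le_mul_left _ (by omega)
      omega
    · have : 2*β*(j+1) ≤ 2*β*i := Nat.mul_le_mul_left _ (by omega)
      omega
  have hL1 : L ≤ S.card := by
    calc L = (Finset.range L).card := (Finset.card_range L).symm
      _ ≤ S.card := Finset.card_le_card_of_injOn g hmaps hinj
  calc L ≤ S.card := hL1
    _ = ∑ t ∈ S, 1 := by simp
    _ ≤ ∑ t ∈ S, f t := Finset.sum_le_sum (fun t ht => by
        rw [hS, Finset.mem_filter] at ht; exact ht.2)
    _ ≤ ∑ t ∈ Finset.Icc 1 (2*β*L), f t :=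
        Finset.sum_le_sum_of_subset (Finset.filter_subset _ _)
end

section
/- For every block-aware caching instance, every set of flushes S, and every τ ∈ {1,…,T}: ∑_{(B,t) alive at τ} (f_τ(S ∪ {(B,t)}) − f_τ(S)) ≤ k · β · (n − k − f_τ(S)), where a flush (B,t) is alive at time τ if t = r(p,τ) + 1 for some page p ∈ B that has been requested among p_1,…,p_τ. -/
open scoped Classical

namespace BlockInstance

variable (I : BlockInstance)

/-- `p` has been requested at some time in `{1,…,τ}`. -/
def Requested (p : Fin I.n) (τ : ℕ) : Prop :=
  ∃ u, 1 ≤ u ∧ u ≤ τ ∧ I.req u = p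

/-- `r(p,τ)`: the last time in `{1,…,τ}` at which `p` is requested
(junk value `0` if there is none). -/
noncomputable def lastReq (p : Fin I.n) (τ : ℕ) : ℕ :=
  Nat.findGreatest (fun u => 1 ≤ u ∧ I.req u = p) τ

/-- The flush `(B,t)` is alive at time `τ`: `t = r(p,τ) + 1` for some page
`p ∈ B` that has been requested among `p_1,…,p_τ`. -/
def Alive (B : Fin I.m) (t τ : ℕ) : Prop :=
  ∃ p, I.blk p = B ∧ I.Requested p τ ∧ t = I.lastReq p τ + 1

end BlockInstance


namespace BlockInstance

variable (I : BlockInstance)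

lemma lastReq_req {p : Fin I.n} {τ : ℕ} (h : I.Requested p τ) :
    1 ≤ I.lastReq p τ ∧ I.lastReq p τ ≤ τ ∧ I.req (I.lastReq p τ) = p := by
  obtain ⟨u, h1, h2, h3⟩ := h
  have hs := Nat.findGreatest_spec (P := fun u => 1 ≤ u ∧ I.req u = p) h2 ⟨h1, h3⟩
  exact ⟨hs.1, Nat.findGreatest_le τ, hs.2⟩

lemma req_not_missing (S : Set (Fin I.m × ℕ)) {τ : ℕ} (hτ1 : 1 ≤ τ) :
    ¬ I.Missing S τ (I.req τ) := by
  rintro ⟨t, ht, _, h3⟩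
  exact h3 τ ht le_rfl hτ1 rfl

end BlockInstance

/-- for every set of flushes `S` and every `τ ∈ {1,…,T}`, the
total marginal coverage of all alive flushes is at most
`k · β · (n − k − f_τ(S))`. -/
theorem alive_marginals_le (I : BlockInstance) (S : Set (Fin I.m × ℕ))
    (hS : I.FlushSet S) (τ : ℕ) (hτ1 : 1 ≤ τ) (hτT : τ ≤ I.T) :
    ∑ x ∈ (Finset.univ ×ˢ Finset.range (I.T + 2)).filter
        (fun x : Fin I.m × ℕ => I.Alive x.1 x.2 τ),
      (I.f τ (insert x S) - I.f τ S) ≤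
    I.k * I.β * (I.n - I.k - I.f τ S) := by
  classical
  set A := (Finset.univ ×ˢ Finset.range (I.T + 2)).filter
      (fun x : Fin I.m × ℕ => I.Alive x.1 x.2 τ) with hA
  set MS := (Finset.univ.filter fun p => I.Missing S τ p) with hMS
  by_cases hcap : I.n - I.k ≤ MS.card
  · -- cap reached: every marginal is zero
    have hz : ∀ x ∈ A, I.f τ (insert x S) - I.f τ S = 0 := by
      intro x hx
      have h1 : I.f τ (insert x S) ≤ I.n - I.k := min_le_left _ _
      have h2 : I.f τ S = I.n - I.k := by
        simp only [BlockInstance.f, ← hMS]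
        omega
      omega
    rw [Finset.sum_congr rfl hz]
    simp
  · push_neg at hcap
    have hfS : I.f τ S = MS.card := by
      simp only [BlockInstance.f, ← hMS]
      omega
    -- the newly missing pages for a flush x
    set New : Fin I.m × ℕ → Finset (Fin I.n) := fun x =>
      Finset.univ.filter fun q => I.Missing (insert x S) τ q ∧ ¬ I.Missing S τ q
      with hNew
    -- step 1: each marginal is bounded by the number of newly missing pages
    have step1 : ∀ x ∈ A, I.f τ (insert x S) - I.f τ S ≤ (New x).card := by
      intro x hx
      have hsub : (Finset.univ.filter fun p => I.Missing (insert x S) τ p)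
          ⊆ MS ∪ New x := by
        intro q hq
        simp only [Finset.mem_filter, Finset.mem_univ, true_and] at hq
        by_cases hqS : I.Missing S τ q
        · exact Finset.mem_union_left _ (by simp [hMS, hqS])
        · exact Finset.mem_union_right _ (by simp [hNew, hq, hqS])
      have hcard : (Finset.univ.filter fun p => I.Missing (insert x S) τ p).card
          ≤ MS.card + (New x).card :=
        le_trans (Finset.card_le_card hsub) (Finset.card_union_le _ _)
      have h1 : I.f τ (insert x S)
          ≤ (Finset.univ.filter fun p => I.Missing (insert x S) τ p).card :=
        min_le_right _ _
      omega
    calc ∑ x ∈ A, (I.f τ (insert x S) - I.f τ S)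
        ≤ ∑ x ∈ A, (New x).card := Finset.sum_le_sum step1
      _ = ∑ x ∈ A, ∑ q : Fin I.n,
            (if I.Missing (insert x S) τ q ∧ ¬ I.Missing S τ q then 1 else 0) := by
          refine Finset.sum_congr rfl fun x _ => ?_
          simp only [hNew]
          rw [Finset.card_filter]
      _ = ∑ q : Fin I.n, ∑ x ∈ A,
            (if I.Missing (insert x S) τ q ∧ ¬ I.Missing S τ q then 1 else 0) :=
          Finset.sum_comm
      _ = ∑ q : Fin I.n,
            (A.filter fun x => I.Missing (insert x S) τ q ∧ ¬ I.Missing S τ q).card := by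
          refine Finset.sum_congr rfl fun q _ => ?_
          rw [Finset.card_filter]
      _ ≤ I.k * I.β * (I.n - I.k - I.f τ S) := ?_
    -- now the per-page count
    set Q : Finset (Fin I.n) :=
      Finset.univ.filter fun q => ¬ I.Missing S τ q ∧ q ≠ I.req τ with hQ
    have hzero : ∀ q : Fin I.n, q ∉ Q →
        (A.filter fun x => I.Missing (insert x S) τ q ∧ ¬ I.Missing S τ q).card = 0 := by
      intro q hqQ
      rw [Finset.card_eq_zero, Finset.filter_eq_empty_iff]
      intro x hx
      simp only [hQ, Finset.mem_filter, Finset.mem_univ, true_and, not_and, not_not] at hqQ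
      rintro ⟨hmi, hms⟩
      have hq : q = I.req τ := hqQ hms
      exact I.req_not_missing (insert x S) hτ1 (hq ▸ hmi)
    have hcount : ∀ q ∈ Q,
        (A.filter fun x => I.Missing (insert x S) τ q ∧ ¬ I.Missing S τ q).card ≤ I.β := by
      intro q _
      refine le_trans (Finset.card_le_card_of_injOn (fun x => I.req (x.2 - 1))
        ?_ ?_) (I.block_size (I.blk q))
      · -- maps into block of q
        intro x hx
        simp only [hA, Finset.mem_coe, Finset.mem_filter] at hx
        obtain ⟨⟨hxA, hal⟩, hmi, hms⟩ := hx
        obtain ⟨p, hbp, hreq, ht⟩ := hal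
        obtain ⟨t, ht1, ht2, ht3⟩ := hmi
        have hts : (I.blk q, t) = x := by
          rcases ht2 with h | h
          · exact h
          · exact absurd ⟨t, ht1, h, ht3⟩ hms
        obtain ⟨hl1, hl2, hl3⟩ := I.lastReq_req hreq
        have hx2 : x.2 - 1 = I.lastReq p τ := by omega
        have : I.req (x.2 - 1) = p := by rw [hx2, hl3]
        simp only [Finset.mem_coe, Finset.mem_filter, Finset.mem_univ, true_and, this, hbp]
        exact congrArg Prod.fst hts.symm
      · -- injective on this set
        intro x hx y hy hxy
        simp only [hA, Finset.mem_filter, Finset.coe_filter, Set.mem_setOf_eq] at hx hy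
        obtain ⟨⟨⟨hxA, hax⟩, hmix, hmsx⟩⟩ := And.intro hx trivial
        obtain ⟨⟨⟨hyA, hay⟩, hmiy, hmsy⟩⟩ := And.intro hy trivial
        obtain ⟨p, hbp, hreq, ht⟩ := hax
        obtain ⟨p', hbp', hreq', ht'⟩ := hay
        obtain ⟨hl1, hl2, hl3⟩ := I.lastReq_req hreq
        obtain ⟨hl1', hl2', hl3'⟩ := I.lastReq_req hreq'
        have e1 : I.req (x.2 - 1) = p := by rw [ht]; simpa using hl3
        have e2 : I.req (y.2 - 1) = p' := by rw [ht']; simpa using hl3'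
        have hxy' : I.req (x.2 - 1) = I.req (y.2 - 1) := hxy
        have hpp : p = p' := by rw [← e1, ← e2]; exact hxy'
        -- first components both equal blk q
        obtain ⟨t, ht1, ht2, ht3⟩ := hmix
        have hts : (I.blk q, t) = x := by
          rcases ht2 with h | h
          · exact h
          · exact absurd ⟨t, ht1, h, ht3⟩ hmsx
        obtain ⟨t', ht1', ht2', ht3'⟩ := hmiy
        have hts' : (I.blk q, t') = y := by
          rcases ht2' with h | h
          · exact h
          · exact absurd ⟨t', ht1', h, ht3'⟩ hmsy
        have hfst : x.1 = y.1 := by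
          rw [← congrArg Prod.fst hts, ← congrArg Prod.fst hts']
        have hsnd : x.2 = y.2 := by rw [ht, ht', hpp]
        exact Prod.ext hfst hsnd
    have hQcard : Q.card ≤ I.n - MS.card - 1 := by
      have hsub : Q ⊆ Finset.univ \ insert (I.req τ) MS := by
        intro q hq
        simp only [hQ, Finset.mem_filter, Finset.mem_univ, true_and] at hq
        simp only [Finset.mem_sdiff, Finset.mem_univ, true_and, Finset.mem_insert,
          hMS, Finset.mem_filter, not_or]
        exact ⟨hq.2, by simp [hq.1]⟩
      have hnotin : I.req τ ∉ MS := by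
        simp only [hMS, Finset.mem_filter, Finset.mem_univ, true_and]
        exact I.req_not_missing S hτ1
      have h1 : (Finset.univ \ insert (I.req τ) MS).card
          = I.n - (MS.card + 1) := by
        rw [Finset.card_sdiff_of_subset (Finset.subset_univ _), Finset.card_insert_of_notMem hnotin]
        simp
      have := Finset.card_le_card hsub
      omega
    calc ∑ q : Fin I.n,
          (A.filter fun x => I.Missing (insert x S) τ q ∧ ¬ I.Missing S τ q).card
        = ∑ q ∈ Q,
          (A.filter fun x => I.Missing (insert x S) τ q ∧ ¬ I.Missing S τ q).card := by
          refine (Finset.sum_subset (Finset.subset_univ Q) ?_).symm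
          intro q _ hq; exact hzero q hq
      _ ≤ ∑ q ∈ Q, I.β := Finset.sum_le_sum hcount
      _ = Q.card * I.β := by rw [Finset.sum_const, smul_eq_mul]
      _ ≤ I.k * I.β * (I.n - I.k - I.f τ S) := by
          have hk : 1 ≤ I.k := le_trans I.one_le_beta I.beta_le_k
          have hkn : I.k ≤ I.n := I.k_le_n
          set d := I.n - I.k - MS.card with hd
          have hd1 : 1 ≤ d := by omega
      -- need Q.card * β ≤ k * β * d
          have hQ2 : Q.card ≤ I.k * d := by
            have h1 : Q.card ≤ I.k + d - 1 := by omega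
            obtain ⟨a, ha⟩ := Nat.exists_eq_add_of_le hk
            obtain ⟨b, hb⟩ := Nat.exists_eq_add_of_le hd1
            have h2 : I.k + d - 1 ≤ I.k * d := by
              rw [ha, hb]
              have he : (1 + a) * (1 + b) = 1 + a + b + a * b := by ring
              exact le_trans (by omega : 1 + a + (1 + b) - 1 ≤ 1 + a + b)
                (by rw [he]; exact Nat.le_add_right _ _)
            omega
          rw [hfS]
          calc Q.card * I.β ≤ (I.k * d) * I.β := Nat.mul_le_mul_right _ hQ2
            _ = I.k * I.β * d := by ring
end

section
/- For every block-aware caching instance, every set of flushes S, and every τ ∈ {1,…,T}: ∑_{B ∈ 𝓑} (f_τ(S ∪ {(B,τ)}) − f_τ(S)) ≤ k · (n − k − f_τ(S)). -/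
open scoped Classical

/-- for every set of flushes `S` and every `τ ∈ {1,…,T}`, the
total marginal coverage of the flushes `(B,τ)` over all blocks `B` is at most
`k · (n − k − f_τ(S))`. -/
theorem time_tau_marginals_le (I : BlockInstance) (S : Set (Fin I.m × ℕ))
    (hS : I.FlushSet S) (τ : ℕ) (hτ1 : 1 ≤ τ) (hτT : τ ≤ I.T) :
    ∑ B : Fin I.m, (I.f τ (insert (B, τ) S) - I.f τ S) ≤
      I.k * (I.n - I.k - I.f τ S) := by
  classical
  set cnt := (Finset.univ.filter fun p => I.Missing S τ p).card with hcntdef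
  have hreqnot : ¬ I.Missing S τ (I.req τ) := by
    rintro ⟨t, ht, -, hcond⟩
    exact hcond τ ht le_rfl hτ1 rfl
  have hmissins : ∀ (B : Fin I.m) (p : Fin I.n),
      I.Missing (insert (B, τ) S) τ p ↔
        I.Missing S τ p ∨ (I.blk p = B ∧ I.req τ ≠ p) := by
    intro B p
    constructor
    · rintro ⟨t, ht, hmem, hcond⟩
      rcases Set.mem_insert_iff.mp hmem with h | h
      · have h1 : I.blk p = B := (Prod.ext_iff.mp h).1
        exact Or.inr ⟨h1, hcond τ ht le_rfl hτ1⟩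
      · exact Or.inl ⟨t, ht, h, hcond⟩
    · rintro (⟨t, ht, h, hcond⟩ | ⟨hB, hreq⟩)
      · exact ⟨t, ht, Set.mem_insert_iff.mpr (Or.inr h), hcond⟩
      · refine ⟨τ, le_rfl, ?_, ?_⟩
        · rw [hB]; exact Set.mem_insert _ _
        · intro u hu1 hu2 _
          have : u = τ := le_antisymm hu2 hu1
          subst this; exact hreq
  set newB := fun B : Fin I.m => (Finset.univ.filter fun p =>
      I.blk p = B ∧ I.req τ ≠ p ∧ ¬ I.Missing S τ p).card with hnewBdef
  have hcnt' : ∀ B : Fin I.m,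
      (Finset.univ.filter fun p => I.Missing (insert (B, τ) S) τ p).card
        = cnt + newB B := by
    intro B
    have hset : (Finset.univ.filter fun p => I.Missing (insert (B, τ) S) τ p)
        = (Finset.univ.filter fun p => I.Missing S τ p) ∪
          (Finset.univ.filter fun p =>
            I.blk p = B ∧ I.req τ ≠ p ∧ ¬ I.Missing S τ p) := by
      ext p
      simp only [Finset.mem_union, Finset.mem_filter, Finset.mem_univ, true_and,
        hmissins]
      tauto
    rw [hset, Finset.card_union_of_disjoint]
    rw [Finset.disjoint_left]
    intro p hp hq
    simp only [Finset.mem_filter, Finset.mem_univ, true_and] at hp hq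
    exact hq.2.2 hp
  have hsum : ∑ B : Fin I.m, newB B
      = (Finset.univ.filter fun p => I.req τ ≠ p ∧ ¬ I.Missing S τ p).card := by
    rw [Finset.card_eq_sum_card_fiberwise
      (f := I.blk) (t := Finset.univ) (fun x _ => Finset.mem_univ _)]
    apply Finset.sum_congr rfl
    intro B _
    rw [Finset.filter_filter]
    refine congrArg Finset.card ?_
    ext p
    simp only [Finset.mem_filter, Finset.mem_univ, true_and]
    tauto
  have hMtotal : (Finset.univ.filter fun p => I.Missing S τ p).card
      + (Finset.univ.filter fun p => ¬ I.Missing S τ p).card = I.n := by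
    rw [Finset.card_filter_add_card_filter_not, Finset.card_univ,
      Fintype.card_fin]
  have hins : (Finset.univ.filter fun p => ¬ I.Missing S τ p)
      = insert (I.req τ)
        (Finset.univ.filter fun p => I.req τ ≠ p ∧ ¬ I.Missing S τ p) := by
    ext p
    simp only [Finset.mem_insert, Finset.mem_filter, Finset.mem_univ, true_and]
    constructor
    · intro hp
      by_cases h : I.req τ = p
      · exact Or.inl h.symm
      · exact Or.inr ⟨h, hp⟩
    · rintro (h | ⟨-, hp⟩)
      · subst h; exact hreqnot
      · exact hp
  have hMA : (Finset.univ.filter fun p => ¬ I.Missing S τ p).card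
      = (Finset.univ.filter fun p => I.req τ ≠ p ∧ ¬ I.Missing S τ p).card + 1 := by
    rw [hins, Finset.card_insert_of_notMem]
    simp only [Finset.mem_filter, Finset.mem_univ, true_and]
    intro h
    exact h.1 rfl
  by_cases hcase : I.n - I.k ≤ cnt
  · have hfS : I.f τ S = I.n - I.k := min_eq_left hcase
    have hzero : ∀ B : Fin I.m, I.f τ (insert (B, τ) S) - I.f τ S = 0 := by
      intro B
      have h1 : I.f τ (insert (B, τ) S) ≤ I.n - I.k := min_le_left _ _
      omega
    simp [hzero]
  · push_neg at hcase
    have hfS : I.f τ S = cnt := min_eq_right (le_of_lt hcase)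
    have hstep : ∑ B : Fin I.m, (I.f τ (insert (B, τ) S) - I.f τ S)
        ≤ ∑ B : Fin I.m, newB B := by
      refine Finset.sum_le_sum fun B _ => ?_
      have h1 : I.f τ (insert (B, τ) S) ≤ cnt + newB B := by
        rw [BlockInstance.f, hcnt' B]; exact min_le_right _ _
      omega
    refine hstep.trans ?_
    rw [hsum, hfS]
    have hk1 : 1 ≤ I.k := le_trans I.one_le_beta I.beta_le_k
    have hkn : I.k ≤ I.n := I.k_le_n
    set d := I.n - I.k - cnt with hddef
    have hd1 : 1 ≤ d := by omega
    have h1 : d - 1 ≤ I.k * (d - 1) := Nat.le_mul_of_pos_left _ hk1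
    have h2 : I.k * d = I.k * (d - 1) + I.k := by
      rw [← Nat.mul_succ]; congr 1; omega
    omega
end
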